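/- arXiv:1209.2865 — 9 statements merged into one kernel-verified Lean document; each statement's English description precedes it below -/
import Mathlib

section
/- Let u₀ > 0 and let f, g : ℝ → ℝ be real analytic at every point of the open interval (0, u₀). Assume that f is not identically zero on (0, u₀), that g(u) > 0 for all u ∈ (0, u₀), that the derivative of the quotient u ↦ f(u)/g(u) is nonnegative at every point of (0, u₀), and that f(u)/g(u) tends to 0 as u tends to 0 from the right. Then f(u) > 0 for all u ∈ (0, u₀). -/
open Set Filter

/-- Lemma 1 (comparison function): if `f, g` are real analytic on `(0, u₀)`,
`f` is not identically zero, `g > 0`, the quotient `f/g` has nonnegative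
derivative on `(0, u₀)` and tends to `0` as `u → 0⁺`, then `f > 0` on `(0, u₀)`. -/
theorem comparison_function_lemma (u₀ : ℝ) (hu₀ : 0 < u₀) (f g : ℝ → ℝ)
    (hf_an : ∀ u ∈ Ioo 0 u₀, AnalyticAt ℝ f u)
    (hg_an : ∀ u ∈ Ioo 0 u₀, AnalyticAt ℝ g u)
    (hf_ne : ∃ u ∈ Ioo 0 u₀, f u ≠ 0)
    (hg_pos : ∀ u ∈ Ioo 0 u₀, 0 < g u)
    (hderiv : ∀ u ∈ Ioo 0 u₀, 0 ≤ deriv (fun u => f u / g u) u)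
    (hlim : Tendsto (fun u => f u / g u) (nhdsWithin 0 (Ioi 0)) (nhds 0)) :
    ∀ u ∈ Ioo 0 u₀, 0 < f u := by
  set h : ℝ → ℝ := fun u => f u / g u with hh
  have hdiff : ∀ u ∈ Ioo 0 u₀, DifferentiableAt ℝ h u := by
    intro u hu
    exact ((hf_an u hu).differentiableAt).div ((hg_an u hu).differentiableAt)
      (ne_of_gt (hg_pos u hu))
  have hmono : MonotoneOn h (Ioo 0 u₀) := by
    apply monotoneOn_of_deriv_nonneg (convex_Ioo 0 u₀)
    · exact fun u hu => (hdiff u hu).continuousAt.continuousWithinAt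
    · rw [interior_Ioo]
      exact fun u hu => (hdiff u hu).differentiableWithinAt
    · rw [interior_Ioo]; exact hderiv
  have hnonneg : ∀ u ∈ Ioo 0 u₀, 0 ≤ h u := by
    intro u hu
    have hle : ∀ᶠ t in nhdsWithin 0 (Ioi 0), h t ≤ h u := by
      filter_upwards [Ioo_mem_nhdsGT_of_mem ⟨le_refl 0, hu.1⟩] with t ht
      exact hmono ⟨ht.1, ht.2.trans hu.2⟩ hu (le_of_lt ht.2)
    exact le_of_tendsto hlim hle
  have hfnonneg : ∀ u ∈ Ioo 0 u₀, 0 ≤ f u := by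
    intro u hu
    have := hnonneg u hu
    have hgu := hg_pos u hu
    have : 0 ≤ f u / g u := this
    exact (div_nonneg_iff.mp this).resolve_right
      (fun ⟨_, hg'⟩ => absurd hgu (not_lt.mpr hg')) |>.1
  intro u hu
  rcases lt_or_eq_of_le (hfnonneg u hu) with hpos | heq
  · exact hpos
  -- f u = 0 : derive contradiction
  exfalso
  have hhu : h u = 0 := by simp [hh, ← heq]
  -- h = 0 on Ioo 0 u
  have hzero : ∀ t ∈ Ioo 0 u, f t = 0 := by
    intro t ht
    have ht' : t ∈ Ioo 0 u₀ := ⟨ht.1, ht.2.trans hu.2⟩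
    have h1 : h t ≤ h u := hmono ht' hu (le_of_lt ht.2)
    have h2 : 0 ≤ h t := hnonneg t ht'
    have : h t = 0 := le_antisymm (hhu ▸ h1) h2
    have hgt := ne_of_gt (hg_pos t ht')
    have : f t / g t = 0 := this
    exact (div_eq_zero_iff.mp this).resolve_right hgt
  -- identity theorem
  have han : AnalyticOnNhd ℝ f (Ioo 0 u₀) := hf_an
  have hall : EqOn f 0 (Ioo 0 u₀) := by
    apply han.eqOn_zero_of_preconnected_of_eventuallyEq_zero
      (isPreconnected_Ioo) (z₀ := u / 2)
      ⟨by linarith [hu.1], by nlinarith [hu.2, hu.1]⟩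
    have : Ioo (0:ℝ) u ∈ nhds (u / 2) :=
      (isOpen_Ioo).mem_nhds ⟨by linarith [hu.1], by linarith [hu.1]⟩
    filter_upwards [this] with t ht using hzero t ht
  obtain ⟨v, hv, hvne⟩ := hf_ne
  exact hvne (hall hv)
end

section
/- For every u ∈ (0, π) one has d₀⁰(u) < 0, where d₀⁰(u) = (1/2)·sin u·(2u³·sin u + 3u²·cos u + u·sin³ u − 6u·sin u + 3·cos u·sin² u). -/
open Set Real

private lemma hasDerivAt_congr' {f : ℝ → ℝ} {v w x : ℝ} (h : HasDerivAt f v x) (hv : v = w) :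
    HasDerivAt f w x := hv ▸ h

private lemma ladder (f f' : ℝ → ℝ) (hd : ∀ x, HasDerivAt f (f' x) x)
    (h0 : 0 ≤ f 0) (hp : ∀ x, 0 ≤ x → 0 ≤ f' x) :
    ∀ x, 0 ≤ x → 0 ≤ f x := by
  intro x hx
  have hmono : MonotoneOn f (Set.Ici 0) := by
    apply monotoneOn_of_deriv_nonneg (convex_Ici 0)
    · exact fun y _ => (hd y).continuousAt.continuousWithinAt
    · exact fun y _ => (hd y).differentiableAt.differentiableWithinAt
    · intro y hy
      rw [interior_Ici] at hy
      rw [(hd y).deriv]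
      exact hp y (le_of_lt hy)
  have := hmono (Set.self_mem_Ici) (Set.mem_Ici.mpr hx) hx
  linarith

private lemma step1 : ∀ x : ℝ, 0 ≤ x → 0 ≤ x - Real.sin x := by
  intro x hx; have := Real.sin_le hx; linarith

private lemma step2 : ∀ x : ℝ, 0 ≤ x → 0 ≤ Real.cos x - (1 - x ^ 2 / 2) := by
  refine ladder (fun x : ℝ => Real.cos x - (1 - x ^ 2 / 2)) (fun x : ℝ => x - Real.sin x) (fun y => ?_) (by norm_num) step1
  exact hasDerivAt_congr' ((Real.hasDerivAt_cos y).sub ((hasDerivAt_const y (1:ℝ)).sub ((hasDerivAt_pow 2 y).div_const 2))) (by push_cast; ring)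

private lemma step3 : ∀ x : ℝ, 0 ≤ x → 0 ≤ Real.sin x - (x - x ^ 3 / 6) := by
  refine ladder (fun x : ℝ => Real.sin x - (x - x ^ 3 / 6)) (fun x : ℝ => Real.cos x - (1 - x ^ 2 / 2)) (fun y => ?_) (by norm_num) step2
  exact hasDerivAt_congr' ((Real.hasDerivAt_sin y).sub ((hasDerivAt_id y).sub ((hasDerivAt_pow 3 y).div_const 6))) (by push_cast; ring)

private lemma step4 : ∀ x : ℝ, 0 ≤ x → 0 ≤ 1 - x ^ 2 / 2 + x ^ 4 / 24 - Real.cos x := by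
  refine ladder (fun x : ℝ => 1 - x ^ 2 / 2 + x ^ 4 / 24 - Real.cos x) (fun x : ℝ => Real.sin x - (x - x ^ 3 / 6)) (fun y => ?_) (by norm_num) step3
  exact hasDerivAt_congr' ((((hasDerivAt_const y (1:ℝ)).sub ((hasDerivAt_pow 2 y).div_const 2)).add ((hasDerivAt_pow 4 y).div_const 24)).sub (Real.hasDerivAt_cos y)) (by push_cast; ring)

private lemma step5 : ∀ x : ℝ, 0 ≤ x → 0 ≤ x - x ^ 3 / 6 + x ^ 5 / 120 - Real.sin x := by
  refine ladder (fun x : ℝ => x - x ^ 3 / 6 + x ^ 5 / 120 - Real.sin x) (fun x : ℝ => 1 - x ^ 2 / 2 + x ^ 4 / 24 - Real.cos x) (fun y => ?_) (by norm_num) step4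
  exact hasDerivAt_congr' ((((hasDerivAt_id y).sub ((hasDerivAt_pow 3 y).div_const 6)).add ((hasDerivAt_pow 5 y).div_const 120)).sub (Real.hasDerivAt_sin y)) (by push_cast; ring)

private lemma step6 : ∀ x : ℝ, 0 ≤ x → 0 ≤ Real.cos x - (1 - x ^ 2 / 2 + x ^ 4 / 24 - x ^ 6 / 720) := by
  refine ladder (fun x : ℝ => Real.cos x - (1 - x ^ 2 / 2 + x ^ 4 / 24 - x ^ 6 / 720)) (fun x : ℝ => x - x ^ 3 / 6 + x ^ 5 / 120 - Real.sin x) (fun y => ?_) (by norm_num) step5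
  exact hasDerivAt_congr' ((Real.hasDerivAt_cos y).sub ((((hasDerivAt_const y (1:ℝ)).sub ((hasDerivAt_pow 2 y).div_const 2)).add ((hasDerivAt_pow 4 y).div_const 24)).sub ((hasDerivAt_pow 6 y).div_const 720))) (by push_cast; ring)

private lemma step7 : ∀ x : ℝ, 0 ≤ x → 0 ≤ Real.sin x - (x - x ^ 3 / 6 + x ^ 5 / 120 - x ^ 7 / 5040) := by
  refine ladder (fun x : ℝ => Real.sin x - (x - x ^ 3 / 6 + x ^ 5 / 120 - x ^ 7 / 5040)) (fun x : ℝ => Real.cos x - (1 - x ^ 2 / 2 + x ^ 4 / 24 - x ^ 6 / 720)) (fun y => ?_) (by norm_num) step6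
  exact hasDerivAt_congr' ((Real.hasDerivAt_sin y).sub ((((hasDerivAt_id y).sub ((hasDerivAt_pow 3 y).div_const 6)).add ((hasDerivAt_pow 5 y).div_const 120)).sub ((hasDerivAt_pow 7 y).div_const 5040))) (by push_cast; ring)

private lemma step8 : ∀ x : ℝ, 0 ≤ x → 0 ≤ 1 - x ^ 2 / 2 + x ^ 4 / 24 - x ^ 6 / 720 + x ^ 8 / 40320 - Real.cos x := by
  refine ladder (fun x : ℝ => 1 - x ^ 2 / 2 + x ^ 4 / 24 - x ^ 6 / 720 + x ^ 8 / 40320 - Real.cos x) (fun x : ℝ => Real.sin x - (x - x ^ 3 / 6 + x ^ 5 / 120 - x ^ 7 / 5040)) (fun y => ?_) (by norm_num) step7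
  exact hasDerivAt_congr' ((((((hasDerivAt_const y (1:ℝ)).sub ((hasDerivAt_pow 2 y).div_const 2)).add ((hasDerivAt_pow 4 y).div_const 24)).sub ((hasDerivAt_pow 6 y).div_const 720)).add ((hasDerivAt_pow 8 y).div_const 40320)).sub (Real.hasDerivAt_cos y)) (by push_cast; ring)

private lemma step9 : ∀ x : ℝ, 0 ≤ x → 0 ≤ x - x ^ 3 / 6 + x ^ 5 / 120 - x ^ 7 / 5040 + x ^ 9 / 362880 - Real.sin x := by
  refine ladder (fun x : ℝ => x - x ^ 3 / 6 + x ^ 5 / 120 - x ^ 7 / 5040 + x ^ 9 / 362880 - Real.sin x) (fun x : ℝ => 1 - x ^ 2 / 2 + x ^ 4 / 24 - x ^ 6 / 720 + x ^ 8 / 40320 - Real.cos x) (fun y => ?_) (by norm_num) step8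
  exact hasDerivAt_congr' ((((((hasDerivAt_id y).sub ((hasDerivAt_pow 3 y).div_const 6)).add ((hasDerivAt_pow 5 y).div_const 120)).sub ((hasDerivAt_pow 7 y).div_const 5040)).add ((hasDerivAt_pow 9 y).div_const 362880)).sub (Real.hasDerivAt_sin y)) (by push_cast; ring)

private lemma step10 : ∀ x : ℝ, 0 ≤ x → 0 ≤ Real.cos x - (1 - x ^ 2 / 2 + x ^ 4 / 24 - x ^ 6 / 720 + x ^ 8 / 40320 - x ^ 10 / 3628800) := by
  refine ladder (fun x : ℝ => Real.cos x - (1 - x ^ 2 / 2 + x ^ 4 / 24 - x ^ 6 / 720 + x ^ 8 / 40320 - x ^ 10 / 3628800)) (fun x : ℝ => x - x ^ 3 / 6 + x ^ 5 / 120 - x ^ 7 / 5040 + x ^ 9 / 362880 - Real.sin x) (fun y => ?_) (by norm_num) step9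
  exact hasDerivAt_congr' ((Real.hasDerivAt_cos y).sub ((((((hasDerivAt_const y (1:ℝ)).sub ((hasDerivAt_pow 2 y).div_const 2)).add ((hasDerivAt_pow 4 y).div_const 24)).sub ((hasDerivAt_pow 6 y).div_const 720)).add ((hasDerivAt_pow 8 y).div_const 40320)).sub ((hasDerivAt_pow 10 y).div_const 3628800))) (by push_cast; ring)

private lemma step11 : ∀ x : ℝ, 0 ≤ x → 0 ≤ Real.sin x - (x - x ^ 3 / 6 + x ^ 5 / 120 - x ^ 7 / 5040 + x ^ 9 / 362880 - x ^ 11 / 39916800) := by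
  refine ladder (fun x : ℝ => Real.sin x - (x - x ^ 3 / 6 + x ^ 5 / 120 - x ^ 7 / 5040 + x ^ 9 / 362880 - x ^ 11 / 39916800)) (fun x : ℝ => Real.cos x - (1 - x ^ 2 / 2 + x ^ 4 / 24 - x ^ 6 / 720 + x ^ 8 / 40320 - x ^ 10 / 3628800)) (fun y => ?_) (by norm_num) step10
  exact hasDerivAt_congr' ((Real.hasDerivAt_sin y).sub ((((((hasDerivAt_id y).sub ((hasDerivAt_pow 3 y).div_const 6)).add ((hasDerivAt_pow 5 y).div_const 120)).sub ((hasDerivAt_pow 7 y).div_const 5040)).add ((hasDerivAt_pow 9 y).div_const 362880)).sub ((hasDerivAt_pow 11 y).div_const 39916800))) (by push_cast; ring)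

private lemma step12 : ∀ x : ℝ, 0 ≤ x → 0 ≤ 1 - x ^ 2 / 2 + x ^ 4 / 24 - x ^ 6 / 720 + x ^ 8 / 40320 - x ^ 10 / 3628800 + x ^ 12 / 479001600 - Real.cos x := by
  refine ladder (fun x : ℝ => 1 - x ^ 2 / 2 + x ^ 4 / 24 - x ^ 6 / 720 + x ^ 8 / 40320 - x ^ 10 / 3628800 + x ^ 12 / 479001600 - Real.cos x) (fun x : ℝ => Real.sin x - (x - x ^ 3 / 6 + x ^ 5 / 120 - x ^ 7 / 5040 + x ^ 9 / 362880 - x ^ 11 / 39916800)) (fun y => ?_) (by norm_num) step11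
  exact hasDerivAt_congr' ((((((((hasDerivAt_const y (1:ℝ)).sub ((hasDerivAt_pow 2 y).div_const 2)).add ((hasDerivAt_pow 4 y).div_const 24)).sub ((hasDerivAt_pow 6 y).div_const 720)).add ((hasDerivAt_pow 8 y).div_const 40320)).sub ((hasDerivAt_pow 10 y).div_const 3628800)).add ((hasDerivAt_pow 12 y).div_const 479001600)).sub (Real.hasDerivAt_cos y)) (by push_cast; ring)

private lemma step13 : ∀ x : ℝ, 0 ≤ x → 0 ≤ x - x ^ 3 / 6 + x ^ 5 / 120 - x ^ 7 / 5040 + x ^ 9 / 362880 - x ^ 11 / 39916800 + x ^ 13 / 6227020800 - Real.sin x := by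
  refine ladder (fun x : ℝ => x - x ^ 3 / 6 + x ^ 5 / 120 - x ^ 7 / 5040 + x ^ 9 / 362880 - x ^ 11 / 39916800 + x ^ 13 / 6227020800 - Real.sin x) (fun x : ℝ => 1 - x ^ 2 / 2 + x ^ 4 / 24 - x ^ 6 / 720 + x ^ 8 / 40320 - x ^ 10 / 3628800 + x ^ 12 / 479001600 - Real.cos x) (fun y => ?_) (by norm_num) step12
  exact hasDerivAt_congr' ((((((((hasDerivAt_id y).sub ((hasDerivAt_pow 3 y).div_const 6)).add ((hasDerivAt_pow 5 y).div_const 120)).sub ((hasDerivAt_pow 7 y).div_const 5040)).add ((hasDerivAt_pow 9 y).div_const 362880)).sub ((hasDerivAt_pow 11 y).div_const 39916800)).add ((hasDerivAt_pow 13 y).div_const 6227020800)).sub (Real.hasDerivAt_sin y)) (by push_cast; ring)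

private lemma cube_le {a b : ℝ} (h : a ≤ b) : a ^ 3 ≤ b ^ 3 := by
  nlinarith [sq_nonneg (a + b), sq_nonneg (a - b), sq_nonneg a, sq_nonneg b]

private lemma Rneg : ∀ v : ℝ, 0 ≤ v → v ≤ 987 / 100 →
    (-8 : ℝ) / 4725 + (6437 : ℝ) / 22809600 * v + (-61 : ℝ) / 2661120 * v ^ 2 + (4208417 : ℝ) / 3487131648000 * v ^ 3 + (-322571 : ℝ) / 6974263296000 * v ^ 4 + (1729087 : ℝ) / 1255367393280000 * v ^ 5 + (-1747279 : ℝ) / 52725430517760000 * v ^ 6 + (3051281 : ℝ) / 4639837885562880000 * v ^ 7 + (-1507433 : ℝ) / 139195136566886400000 * v ^ 8 + (14368699 : ℝ) / 97714985869954252800000 * v ^ 9 + (-6863 : ℝ) / 4230085968396288000000 * v ^ 10 + (2791 : ℝ) / 195429971739908505600000 * v ^ 11 + (-1049 : ℝ) / 10748648445694967808000000 * v ^ 12 + (19 : ℝ) / 36852508956668461056000000 * v ^ 13 + (-1 : ℝ) / 515935125393358454784000000 * v ^ 14 + (1 : ℝ) / 241457638684091756838912000000 * v ^ 15 < 0 :=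 by
  intro v hv0 hvt
  rcases le_total v ((2729 : ℝ) / 512) with hc0 | hc0
  · -- interval [0.0, 5.330078125]
    have hk1 : v ^ 1 ≤ (2729 : ℝ) / 512 := by
      calc v ^ 1 ≤ ((2729 : ℝ) / 512) ^ 1 := pow_le_pow_left₀ hv0 hc0 1
        _ = (2729 : ℝ) / 512 := by norm_num
    have hk2 : (0 : ℝ) ≤ v ^ 2 := by
      calc ((0 : ℝ)) = ((0 : ℝ)) ^ 2 := by norm_num
        _ ≤ v ^ 2 := pow_le_pow_left₀ (by norm_num) hv0 2
    have hk3 : v ^ 3 ≤ (20324066489 : ℝ) / 134217728 := by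
      calc v ^ 3 ≤ ((2729 : ℝ) / 512) ^ 3 := pow_le_pow_left₀ hv0 hc0 3
        _ = (20324066489 : ℝ) / 134217728 := by norm_num
    have hk4 : (0 : ℝ) ≤ v ^ 4 := by
      calc ((0 : ℝ)) = ((0 : ℝ)) ^ 4 := by norm_num
        _ ≤ v ^ 4 := pow_le_pow_left₀ (by norm_num) hv0 4
    have hk5 : v ^ 5 ≤ (151362286056904649 : ℝ) / 35184372088832 := by
      calc v ^ 5 ≤ ((2729 : ℝ) / 512) ^ 5 := pow_le_pow_left₀ hv0 hc0 5
        _ = (151362286056904649 : ℝ) / 35184372088832 := by norm_num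
    have hk6 : (0 : ℝ) ≤ v ^ 6 := by
      calc ((0 : ℝ)) = ((0 : ℝ)) ^ 6 := by norm_num
        _ ≤ v ^ 6 := pow_le_pow_left₀ (by norm_num) hv0 6
    have hk7 : v ^ 7 ≤ (1127261695033920016053209 : ℝ) / 9223372036854775808 := by
      calc v ^ 7 ≤ ((2729 : ℝ) / 512) ^ 7 := pow_le_pow_left₀ hv0 hc0 7
        _ = (1127261695033920016053209 : ℝ) / 9223372036854775808 := by norm_num
    have hk8 : (0 : ℝ) ≤ v ^ 8 := by
      calc ((0 : ℝ)) = ((0 : ℝ)) ^ 8 := by norm_num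
        _ ≤ v ^ 8 := pow_le_pow_left₀ (by norm_num) hv0 8
    have hk9 : v ^ 9 ≤ (8395214965325112318275326888169 : ℝ) / 2417851639229258349412352 := by
      calc v ^ 9 ≤ ((2729 : ℝ) / 512) ^ 9 := pow_le_pow_left₀ hv0 hc0 9
        _ = (8395214965325112318275326888169 : ℝ) / 2417851639229258349412352 := by norm_num
    have hk10 : (0 : ℝ) ≤ v ^ 10 := by
      calc ((0 : ℝ)) = ((0 : ℝ)) ^ 10 := by norm_num
        _ ≤ v ^ 10 := pow_le_pow_left₀ (by norm_num) hv0 10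
    have hk11 : v ^ 11 ≤ (62522868136575819808728718755352225529 : ℝ) / 633825300114114700748351602688 := by
      calc v ^ 11 ≤ ((2729 : ℝ) / 512) ^ 11 := pow_le_pow_left₀ hv0 hc0 11
        _ = (62522868136575819808728718755352225529 : ℝ) / 633825300114114700748351602688 := by norm_num
    have hk12 : (0 : ℝ) ≤ v ^ 12 := by
      calc ((0 : ℝ)) = ((0 : ℝ)) ^ 12 := by norm_num
        _ ≤ v ^ 12 := pow_le_pow_left₀ (by norm_num) hv0 12
    have hk13 : v ^ 13 ≤ (465635371597928360052138417936079133845921289 : ℝ) / 166153499473114484112975882535043072 := by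
      calc v ^ 13 ≤ ((2729 : ℝ) / 512) ^ 13 := pow_le_pow_left₀ hv0 hc0 13
        _ = (465635371597928360052138417936079133845921289 : ℝ) / 166153499473114484112975882535043072 := by norm_num
    have hk14 : (0 : ℝ) ≤ v ^ 14 := by
      calc ((0 : ℝ)) = ((0 : ℝ)) ^ 14 := by norm_num
        _ ≤ v ^ 14 := pow_le_pow_left₀ (by norm_num) hv0 14
    have hk15 : v ^ 15 ≤ (3467791957488647183715057791412291120648601890471449 : ℝ) / 43556142965880123323311949751266331066368 := by
      calc v ^ 15 ≤ ((2729 : ℝ) / 512) ^ 15 := pow_le_pow_left₀ hv0 hc0 15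
        _ = (3467791957488647183715057791412291120648601890471449 : ℝ) / 43556142965880123323311949751266331066368 := by norm_num
    linarith
  · -- v ≥ 5.330078125
    rcases le_total v ((14203 : ℝ) / 2048) with hc1 | hc1
    · -- interval [5.330078125, 6.93505859375]
      have hk1 : v ^ 1 ≤ (14203 : ℝ) / 2048 := by
        calc v ^ 1 ≤ ((14203 : ℝ) / 2048) ^ 1 := pow_le_pow_left₀ hv0 hc1 1
          _ = (14203 : ℝ) / 2048 := by norm_num
      have hk2 : (7447441 : ℝ) / 262144 ≤ v ^ 2 := by
        calc ((7447441 : ℝ) / 262144) = ((2729 : ℝ) / 512) ^ 2 := by norm_num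
          _ ≤ v ^ 2 := pow_le_pow_left₀ (by norm_num) hc0 2
      have hk3 : v ^ 3 ≤ (2865103143427 : ℝ) / 8589934592 := by
        calc v ^ 3 ≤ ((14203 : ℝ) / 2048) ^ 3 := pow_le_pow_left₀ hv0 hc1 3
          _ = (2865103143427 : ℝ) / 8589934592 := by norm_num
      have hk4 : (55464377448481 : ℝ) / 68719476736 ≤ v ^ 4 := by
        calc ((55464377448481 : ℝ) / 68719476736) = ((2729 : ℝ) / 512) ^ 4 := by norm_num
          _ ≤ v ^ 4 := pow_le_pow_left₀ (by norm_num) hc0 4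
      have hk5 : v ^ 5 ≤ (577963530414368551243 : ℝ) / 36028797018963968 := by
        calc v ^ 5 ≤ ((14203 : ℝ) / 2048) ^ 5 := pow_le_pow_left₀ hv0 hc1 5
          _ = (577963530414368551243 : ℝ) / 36028797018963968 := by norm_num
      have hk6 : (413067678649292787121 : ℝ) / 18014398509481984 ≤ v ^ 6 := by
        calc ((413067678649292787121 : ℝ) / 18014398509481984) = ((2729 : ℝ) / 512) ^ 6 := by norm_num
          _ ≤ v ^ 6 := pow_le_pow_left₀ (by norm_num) hc0 6
      have hk7 : v ^ 7 ≤ (116589813967216352602521384787 : ℝ) / 151115727451828646838272 := by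
        calc v ^ 7 ≤ ((14203 : ℝ) / 2048) ^ 7 := pow_le_pow_left₀ hv0 hc1 7
          _ = (116589813967216352602521384787 : ℝ) / 151115727451828646838272 := by norm_num
      have hk8 : (3076297165747567723809207361 : ℝ) / 4722366482869645213696 ≤ v ^ 8 := by
        calc ((3076297165747567723809207361 : ℝ) / 4722366482869645213696) = ((2729 : ℝ) / 512) ^ 8 := by norm_num
          _ ≤ v ^ 8 := pow_le_pow_left₀ (by norm_num) hc0 8
      have hk9 : v ^ 9 ≤ (23519104589807837876961320273126995483 : ℝ) / 633825300114114700748351602688 := by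
        calc v ^ 9 ≤ ((14203 : ℝ) / 2048) ^ 9 := pow_le_pow_left₀ hv0 hc1 9
          _ = (23519104589807837876961320273126995483 : ℝ) / 633825300114114700748351602688 := by norm_num
      have hk10 : (22910541640372231516573367077813201 : ℝ) / 1237940039285380274899124224 ≤ v ^ 10 := by
        calc ((22910541640372231516573367077813201 : ℝ) / 1237940039285380274899124224) = ((2729 : ℝ) / 512) ^ 10 := by norm_num
          _ ≤ v ^ 10 := pow_le_pow_left₀ (by norm_num) hc0 10
      have hk11 : v ^ 11 ≤ (4744396288871845365568138617012480247350230947 : ℝ) / 2658455991569831745807614120560689152 := by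
        calc v ^ 11 ≤ ((14203 : ℝ) / 2048) ^ 11 := pow_le_pow_left₀ hv0 hc1 11
          _ = (4744396288871845365568138617012480247350230947 : ℝ) / 2658455991569831745807614120560689152 := by norm_num
      have hk12 : (170624907144715412258020673483356223468641 : ℝ) / 324518553658426726783156020576256 ≤ v ^ 12 := by
        calc ((170624907144715412258020673483356223468641 : ℝ) / 324518553658426726783156020576256) = ((2729 : ℝ) / 512) ^ 12 := by norm_num
          _ ≤ v ^ 12 := pow_le_pow_left₀ (by norm_num) hc0 12
      have hk13 : v ^ 13 ≤ (957064332951497380584914166257813533505097033981842923 : ℝ) / 11150372599265311570767859136324180752990208 := by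
        calc v ^ 13 ≤ ((14203 : ℝ) / 2048) ^ 13 := pow_le_pow_left₀ hv0 hc1 13
          _ = (957064332951497380584914166257813533505097033981842923 : ℝ) / 11150372599265311570767859136324180752990208 := by norm_num
      have hk14 : (1270718929090746494582285742547559956265519197681 : ℝ) / 85070591730234615865843651857942052864 ≤ v ^ 14 := by
        calc ((1270718929090746494582285742547559956265519197681 : ℝ) / 85070591730234615865843651857942052864) = ((2729 : ℝ) / 512) ^ 14 := by norm_num
          _ ≤ v ^ 14 := pow_le_pow_left₀ (by norm_num) hc0 14
      have hk15 : v ^ 15 ≤ (193064002591086395961444352435418182929344201745267365847345907 : ℝ) / 46768052394588893382517914646921056628989841375232 := by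
        calc v ^ 15 ≤ ((14203 : ℝ) / 2048) ^ 15 := pow_le_pow_left₀ hv0 hc1 15
          _ = (193064002591086395961444352435418182929344201745267365847345907 : ℝ) / 46768052394588893382517914646921056628989841375232 := by norm_num
      linarith
    · -- v ≥ 6.93505859375
      rcases le_total v ((4081 : ℝ) / 512) with hc2 | hc2
      · -- interval [6.93505859375, 7.970703125]
        have hk1 : v ^ 1 ≤ (4081 : ℝ) / 512 := by
          calc v ^ 1 ≤ ((4081 : ℝ) / 512) ^ 1 := pow_le_pow_left₀ hv0 hc2 1
            _ = (4081 : ℝ) / 512 := by norm_num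
        have hk2 : (201725209 : ℝ) / 4194304 ≤ v ^ 2 := by
          calc ((201725209 : ℝ) / 4194304) = ((14203 : ℝ) / 2048) ^ 2 := by norm_num
            _ ≤ v ^ 2 := pow_le_pow_left₀ (by norm_num) hc1 2
        have hk3 : v ^ 3 ≤ (67967263441 : ℝ) / 134217728 := by
          calc v ^ 3 ≤ ((4081 : ℝ) / 512) ^ 3 := pow_le_pow_left₀ hv0 hc2 3
            _ = (67967263441 : ℝ) / 134217728 := by norm_num
        have hk4 : (40693059946093681 : ℝ) / 17592186044416 ≤ v ^ 4 := by
          calc ((40693059946093681 : ℝ) / 17592186044416) = ((14203 : ℝ) / 2048) ^ 4 := by norm_num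
            _ ≤ v ^ 4 := pow_le_pow_left₀ (by norm_num) hc1 4
        have hk5 : v ^ 5 ≤ (1131964934981204401 : ℝ) / 35184372088832 := by
          calc v ^ 5 ≤ ((4081 : ℝ) / 512) ^ 5 := pow_le_pow_left₀ hv0 hc2 5
            _ = (1131964934981204401 : ℝ) / 35184372088832 := by norm_num
        have hk6 : (8208816022475276533304329 : ℝ) / 73786976294838206464 ≤ v ^ 6 := by
          calc ((8208816022475276533304329 : ℝ) / 73786976294838206464) = ((14203 : ℝ) / 2048) ^ 6 := by norm_num
            _ ≤ v ^ 6 := pow_le_pow_left₀ (by norm_num) hc1 6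
        have hk7 : v ^ 7 ≤ (18852379059505502549922961 : ℝ) / 9223372036854775808 := by
          calc v ^ 7 ≤ ((4081 : ℝ) / 512) ^ 7 := pow_le_pow_left₀ hv0 hc2 7
            _ = (18852379059505502549922961 : ℝ) / 9223372036854775808 := by norm_num
        have hk8 : (1655925127776373856013611228129761 : ℝ) / 309485009821345068724781056 ≤ v ^ 8 := by
          calc ((1655925127776373856013611228129761 : ℝ) / 309485009821345068724781056) = ((14203 : ℝ) / 2048) ^ 8 := by norm_num
            _ ≤ v ^ 8 := pow_le_pow_left₀ (by norm_num) hc1 8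
        have hk9 : v ^ 9 ≤ (313978097041657022053347499275121 : ℝ) / 2417851639229258349412352 := by
          calc v ^ 9 ≤ ((4081 : ℝ) / 512) ^ 9 := pow_le_pow_left₀ hv0 hc2 9
            _ = (313978097041657022053347499275121 : ℝ) / 2417851639229258349412352 := by norm_num
        have hk10 : (334041842489040721366481631839222716845049 : ℝ) / 1298074214633706907132624082305024 ≤ v ^ 10 := by
          calc ((334041842489040721366481631839222716845049 : ℝ) / 1298074214633706907132624082305024) = ((14203 : ℝ) / 2048) ^ 10 := by norm_num
            _ ≤ v ^ 10 := pow_le_pow_left₀ (by norm_num) hc1 10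
        have hk11 : v ^ 11 ≤ (5229167369844196414865821180874958476881 : ℝ) / 633825300114114700748351602688 := by
          calc v ^ 11 ≤ ((4081 : ℝ) / 512) ^ 11 := pow_le_pow_left₀ hv0 hc2 11
            _ = (5229167369844196414865821180874958476881 : ℝ) / 633825300114114700748351602688 := by norm_num
        have hk12 : (67384660490846819727164272777428256953115330140241 : ℝ) / 5444517870735015415413993718908291383296 ≤ v ^ 12 := by
          calc ((67384660490846819727164272777428256953115330140241 : ℝ) / 5444517870735015415413993718908291383296) = ((14203 : ℝ) / 2048) ^ 12 := by norm_num
            _ ≤ v ^ 12 := pow_le_pow_left₀ (by norm_num) hc1 12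
        have hk13 : v ^ 13 ≤ (87089486940279729687364125671974029325681704241 : ℝ) / 166153499473114484112975882535043072 := by
          calc v ^ 13 ≤ ((4081 : ℝ) / 512) ^ 13 := pow_le_pow_left₀ hv0 hc2 13
            _ = (87089486940279729687364125671974029325681704241 : ℝ) / 166153499473114484112975882535043072 := by norm_num
        have hk14 : (13593184720910117296447535903359725616372893173644115035369 : ℝ) / 22835963083295358096932575511191922182123945984 ≤ v ^ 14 := by
          calc ((13593184720910117296447535903359725616372893173644115035369 : ℝ) / 22835963083295358096932575511191922182123945984) = ((14203 : ℝ) / 2048) ^ 14 := by norm_num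
            _ ≤ v ^ 14 := pow_le_pow_left₀ (by norm_num) hc1 14
        have hk15 : v ^ 15 ≤ (1450437172705592115141716760215557461820354809865693201 : ℝ) / 43556142965880123323311949751266331066368 := by
          calc v ^ 15 ≤ ((4081 : ℝ) / 512) ^ 15 := pow_le_pow_left₀ hv0 hc2 15
            _ = (1450437172705592115141716760215557461820354809865693201 : ℝ) / 43556142965880123323311949751266331066368 := by norm_num
        linarith
      · -- v ≥ 7.970703125
        rcases le_total v ((8949 : ℝ) / 1024) with hc3 | hc3
        · -- interval [7.970703125, 8.7392578125]
          have hk1 : v ^ 1 ≤ (8949 : ℝ) / 1024 := by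
            calc v ^ 1 ≤ ((8949 : ℝ) / 1024) ^ 1 := pow_le_pow_left₀ hv0 hc3 1
              _ = (8949 : ℝ) / 1024 := by norm_num
          have hk2 : (16654561 : ℝ) / 262144 ≤ v ^ 2 := by
            calc ((16654561 : ℝ) / 262144) = ((4081 : ℝ) / 512) ^ 2 := by norm_num
              _ ≤ v ^ 2 := pow_le_pow_left₀ (by norm_num) hc2 2
          have hk3 : v ^ 3 ≤ (716677094349 : ℝ) / 1073741824 := by
            calc v ^ 3 ≤ ((8949 : ℝ) / 1024) ^ 3 := pow_le_pow_left₀ hv0 hc3 3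
              _ = (716677094349 : ℝ) / 1073741824 := by norm_num
          have hk4 : (277374402102721 : ℝ) / 68719476736 ≤ v ^ 4 := by
            calc ((277374402102721 : ℝ) / 68719476736) = ((4081 : ℝ) / 512) ^ 4 := by norm_num
              _ ≤ v ^ 4 := pow_le_pow_left₀ (by norm_num) hc2 4
          have hk5 : v ^ 5 ≤ (57394799146779019749 : ℝ) / 1125899906842624 := by
            calc v ^ 5 ≤ ((8949 : ℝ) / 1024) ^ 5 := pow_le_pow_left₀ hv0 hc3 5
              _ = (57394799146779019749 : ℝ) / 1125899906842624 := by norm_num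
          have hk6 : (4619548899658295160481 : ℝ) / 18014398509481984 ≤ v ^ 6 := by
            calc ((4619548899658295160481 : ℝ) / 18014398509481984) = ((4081 : ℝ) / 512) ^ 6 := by norm_num
              _ ≤ v ^ 6 := pow_le_pow_left₀ (by norm_num) hc2 6
          have hk7 : v ^ 7 ≤ (4596439589144938231769785149 : ℝ) / 1180591620717411303424 := by
            calc v ^ 7 ≤ ((8949 : ℝ) / 1024) ^ 7 := pow_le_pow_left₀ hv0 hc3 7
              _ = (4596439589144938231769785149 : ℝ) / 1180591620717411303424 := by norm_num
          have hk8 : (76936558941841955906235603841 : ℝ) / 4722366482869645213696 ≤ v ^ 8 := by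
            calc ((76936558941841955906235603841 : ℝ) / 4722366482869645213696) = ((4081 : ℝ) / 512) ^ 8 := by norm_num
              _ ≤ v ^ 8 := pow_le_pow_left₀ (by norm_num) hc2 8
          have hk9 : v ^ 9 ≤ (368104030517276309460928767513390549 : ℝ) / 1237940039285380274899124224 := by
            calc v ^ 9 ≤ ((8949 : ℝ) / 1024) ^ 9 := pow_le_pow_left₀ hv0 hc3 9
              _ = (368104030517276309460928767513390549 : ℝ) / 1237940039285380274899124224 := by norm_num
          have hk10 : (1281344614027002306999711144541768801 : ℝ) / 1237940039285380274899124224 ≤ v ^ 10 := by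
            calc ((1281344614027002306999711144541768801 : ℝ) / 1237940039285380274899124224) = ((4081 : ℝ) / 512) ^ 10 := by norm_num
              _ ≤ v ^ 10 := pow_le_pow_left₀ (by norm_num) hc2 10
          have hk11 : v ^ 11 ≤ (29479464410467896849931005435731644273835949 : ℝ) / 1298074214633706907132624082305024 := by
            calc v ^ 11 ≤ ((8949 : ℝ) / 1024) ^ 11 := pow_le_pow_left₀ hv0 hc3 11
              _ = (29479464410467896849931005435731644273835949 : ℝ) / 1298074214633706907132624082305024 := by norm_num
          have hk12 : (21340232036334165569067416239150705544151361 : ℝ) / 324518553658426726783156020576256 ≤ v ^ 12 := by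
            calc ((21340232036334165569067416239150705544151361 : ℝ) / 324518553658426726783156020576256) = ((4081 : ℝ) / 512) ^ 12 := by norm_num
              _ ≤ v ^ 12 := pow_le_pow_left₀ (by norm_num) hc2 12
          have hk13 : v ^ 13 ≤ (2360851145006021742535881447849399874744086715121349 : ℝ) / 1361129467683753853853498429727072845824 := by
            calc v ^ 13 ≤ ((8949 : ℝ) / 1024) ^ 13 := pow_le_pow_left₀ hv0 hc3 13
              _ = (2360851145006021742535881447849399874744086715121349 : ℝ) / 1361129467683753853853498429727072845824 := by norm_num
          have hk14 : (355412196203281576854132996867326013678107035007521 : ℝ) / 85070591730234615865843651857942052864 ≤ v ^ 14 := by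
            calc ((355412196203281576854132996867326013678107035007521 : ℝ) / 85070591730234615865843651857942052864) = ((4081 : ℝ) / 512) ^ 14 := by norm_num
              _ ≤ v ^ 14 := pow_le_pow_left₀ (by norm_num) hc2 14
          have hk15 : v ^ 15 ≤ (189067821968200393848310793934321497058330161689893901246749 : ℝ) / 1427247692705959881058285969449495136382746624 := by
            calc v ^ 15 ≤ ((8949 : ℝ) / 1024) ^ 15 := pow_le_pow_left₀ hv0 hc3 15
              _ = (189067821968200393848310793934321497058330161689893901246749 : ℝ) / 1427247692705959881058285969449495136382746624 := by norm_num
          linarith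
        · -- v ≥ 8.7392578125
          rcases le_total v ((1197 : ℝ) / 128) with hc4 | hc4
          · -- interval [8.7392578125, 9.3515625]
            have hk1 : v ^ 1 ≤ (1197 : ℝ) / 128 := by
              calc v ^ 1 ≤ ((1197 : ℝ) / 128) ^ 1 := pow_le_pow_left₀ hv0 hc4 1
                _ = (1197 : ℝ) / 128 := by norm_num
            have hk2 : (80084601 : ℝ) / 1048576 ≤ v ^ 2 := by
              calc ((80084601 : ℝ) / 1048576) = ((8949 : ℝ) / 1024) ^ 2 := by norm_num
                _ ≤ v ^ 2 := pow_le_pow_left₀ (by norm_num) hc3 2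
            have hk3 : v ^ 3 ≤ (1715072373 : ℝ) / 2097152 := by
              calc v ^ 3 ≤ ((1197 : ℝ) / 128) ^ 3 := pow_le_pow_left₀ hv0 hc4 3
                _ = (1715072373 : ℝ) / 2097152 := by norm_num
            have hk4 : (6413543317329201 : ℝ) / 1099511627776 ≤ v ^ 4 := by
              calc ((6413543317329201 : ℝ) / 1099511627776) = ((8949 : ℝ) / 1024) ^ 4 := by norm_num
                _ ≤ v ^ 4 := pow_le_pow_left₀ (by norm_num) hc3 4
            have hk5 : v ^ 5 ≤ (2457371131685757 : ℝ) / 34359738368 := by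
              calc v ^ 5 ≤ ((1197 : ℝ) / 128) ^ 5 := pow_le_pow_left₀ hv0 hc4 5
                _ = (2457371131685757 : ℝ) / 34359738368 := by norm_num
            have hk6 : (513626057564525447733801 : ℝ) / 1152921504606846976 ≤ v ^ 6 := by
              calc ((513626057564525447733801 : ℝ) / 1152921504606846976) = ((8949 : ℝ) / 1024) ^ 6 := by norm_num
                _ ≤ v ^ 6 := pow_le_pow_left₀ (by norm_num) hc3 6
            have hk7 : v ^ 7 ≤ (3520943473819537801413 : ℝ) / 562949953421312 := by
              calc v ^ 7 ≤ ((1197 : ℝ) / 128) ^ 7 := pow_le_pow_left₀ hv0 hc4 7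
                _ = (3520943473819537801413 : ℝ) / 562949953421312 := by norm_num
            have hk8 : (41133537883258052236107807298401 : ℝ) / 1208925819614629174706176 ≤ v ^ 8 := by
              calc ((41133537883258052236107807298401 : ℝ) / 1208925819614629174706176) = ((8949 : ℝ) / 1024) ^ 8 := by norm_num
                _ ≤ v ^ 8 := pow_le_pow_left₀ (by norm_num) hc3 8
            have hk9 : v ^ 9 ≤ (5044839497779898137704759117 : ℝ) / 9223372036854775808 := by
              calc v ^ 9 ≤ ((1197 : ℝ) / 128) ^ 9 := pow_le_pow_left₀ hv0 hc4 9
                _ = (5044839497779898137704759117 : ℝ) / 9223372036854775808 := by norm_num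
            have hk10 : (3294162969099105693365851540477332023001 : ℝ) / 1267650600228229401496703205376 ≤ v ^ 10 := by
              calc ((3294162969099105693365851540477332023001 : ℝ) / 1267650600228229401496703205376) = ((8949 : ℝ) / 1024) ^ 10 := by norm_num
                _ ≤ v ^ 10 := pow_le_pow_left₀ (by norm_num) hc3 10
            have hk11 : v ^ 11 ≤ (7228291435974518070786618205669653 : ℝ) / 151115727451828646838272 := by
              calc v ^ 11 ≤ ((1197 : ℝ) / 128) ^ 11 := pow_le_pow_left₀ hv0 hc4 11
                _ = (7228291435974518070786618205669653 : ℝ) / 151115727451828646838272 := by norm_num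
            have hk12 : (263811727009277208910032567644362484606557907601 : ℝ) / 1329227995784915872903807060280344576 ≤ v ^ 12 := by
              calc ((263811727009277208910032567644362484606557907601 : ℝ) / 1329227995784915872903807060280344576) = ((8949 : ℝ) / 1024) ^ 12 := by norm_num
                _ ≤ v ^ 12 := pow_le_pow_left₀ (by norm_num) hc3 12
            have hk13 : v ^ 13 ≤ (10356761024087213262485703644647329845277 : ℝ) / 2475880078570760549798248448 := by
              calc v ^ 13 ≤ ((1197 : ℝ) / 128) ^ 13 := pow_le_pow_left₀ hv0 hc4 13
                _ = (10356761024087213262485703644647329845277 : ℝ) / 2475880078570760549798248448 := by norm_num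
            have hk14 : (21127256896658888573953603076804279479084832013620952201 : ℝ) / 1393796574908163946345982392040522594123776 ≤ v ^ 14 := by
              calc ((21127256896658888573953603076804279479084832013620952201 : ℝ) / 1393796574908163946345982392040522594123776) = ((8949 : ℝ) / 1024) ^ 14 := by norm_num
                _ ≤ v ^ 14 := pow_le_pow_left₀ (by norm_num) hc3 14
            have hk15 : v ^ 15 ≤ (14839260406161375947408878553383496028281493093 : ℝ) / 40564819207303340847894502572032 := by
              calc v ^ 15 ≤ ((1197 : ℝ) / 128) ^ 15 := pow_le_pow_left₀ hv0 hc4 15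
                _ = (14839260406161375947408878553383496028281493093 : ℝ) / 40564819207303340847894502572032 := by norm_num
            linarith
          · -- v ≥ 9.3515625
            rcases le_total v ((10097 : ℝ) / 1024) with hc5 | hc5
            · -- interval [9.3515625, 9.8603515625]
              have hk1 : v ^ 1 ≤ (10097 : ℝ) / 1024 := by
                calc v ^ 1 ≤ ((10097 : ℝ) / 1024) ^ 1 := pow_le_pow_left₀ hv0 hc5 1
                  _ = (10097 : ℝ) / 1024 := by norm_num
              have hk2 : (1432809 : ℝ) / 16384 ≤ v ^ 2 := by
                calc ((1432809 : ℝ) / 16384) = ((1197 : ℝ) / 128) ^ 2 := by norm_num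
                  _ ≤ v ^ 2 := pow_le_pow_left₀ (by norm_num) hc4 2
              have hk3 : v ^ 3 ≤ (1029383182673 : ℝ) / 1073741824 := by
                calc v ^ 3 ≤ ((10097 : ℝ) / 1024) ^ 3 := pow_le_pow_left₀ hv0 hc5 3
                  _ = (1029383182673 : ℝ) / 1073741824 := by norm_num
              have hk4 : (2052941630481 : ℝ) / 268435456 ≤ v ^ 4 := by
                calc ((2052941630481 : ℝ) / 268435456) = ((1197 : ℝ) / 128) ^ 4 := by norm_num
                  _ ≤ v ^ 4 := pow_le_pow_left₀ (by norm_num) hc4 4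
              have hk5 : v ^ 5 ≤ (104945007108051390257 : ℝ) / 1125899906842624 := by
                calc v ^ 5 ≤ ((10097 : ℝ) / 1024) ^ 5 := pow_le_pow_left₀ hv0 hc5 5
                  _ = (104945007108051390257 : ℝ) / 1125899906842624 := by norm_num
              have hk6 : (2941473244627851129 : ℝ) / 4398046511104 ≤ v ^ 6 := by
                calc ((2941473244627851129 : ℝ) / 4398046511104) = ((1197 : ℝ) / 128) ^ 6 := by norm_num
                  _ ≤ v ^ 6 := pow_le_pow_left₀ (by norm_num) hc4 6
              have hk7 : v ^ 7 ≤ (10699081452166638378329508113 : ℝ) / 1180591620717411303424 := by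
                calc v ^ 7 ≤ ((10097 : ℝ) / 1024) ^ 7 := pow_le_pow_left₀ hv0 hc5 7
                  _ = (10699081452166638378329508113 : ℝ) / 1180591620717411303424 := by norm_num
              have hk8 : (4214569338161986748291361 : ℝ) / 72057594037927936 ≤ v ^ 8 := by
                calc ((4214569338161986748291361 : ℝ) / 72057594037927936) = ((1197 : ℝ) / 128) ^ 8 := by norm_num
                  _ ≤ v ^ 8 := pow_le_pow_left₀ (by norm_num) hc4 8
              have hk9 : v ^ 9 ≤ (1090765030891250552187411759381055217 : ℝ) / 1237940039285380274899124224 := by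
                calc v ^ 9 ≤ ((10097 : ℝ) / 1024) ^ 9 := pow_le_pow_left₀ hv0 hc5 9
                  _ = (1090765030891250552187411759381055217 : ℝ) / 1237940039285380274899124224 := by norm_num
              have hk10 : (6038672878842538070832596663049 : ℝ) / 1180591620717411303424 ≤ v ^ 10 := by
                calc ((6038672878842538070832596663049 : ℝ) / 1180591620717411303424) = ((1197 : ℝ) / 128) ^ 10 := by norm_num
                  _ ≤ v ^ 10 := pow_le_pow_left₀ (by norm_num) hc4 10
              have hk11 : v ^ 11 ≤ (111202850257229737066430286108548785169516753 : ℝ) / 1298074214633706907132624082305024 := by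
                calc v ^ 11 ≤ ((10097 : ℝ) / 1024) ^ 11 := pow_le_pow_left₀ hv0 hc5 11
                  _ = (111202850257229737066430286108548785169516753 : ℝ) / 1298074214633706907132624082305024 := by norm_num
              have hk12 : (8652264848861498130731581992186574641 : ℝ) / 19342813113834066795298816 ≤ v ^ 12 := by
                calc ((8652264848861498130731581992186574641 : ℝ) / 19342813113834066795298816) = ((1197 : ℝ) / 128) ^ 12 := by norm_num
                  _ ≤ v ^ 12 := pow_le_pow_left₀ (by norm_num) hc4 12
              have hk13 : v ^ 13 ≤ (11337064862840069671147961408467458495700197783948977 : ℝ) / 1361129467683753853853498429727072845824 := by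
                calc v ^ 13 ≤ ((10097 : ℝ) / 1024) ^ 13 := pow_le_pow_left₀ hv0 hc5 13
                  _ = (11337064862840069671147961408467458495700197783948977 : ℝ) / 1361129467683753853853498429727072845824 := by norm_num
              have hk14 : (12397042945832394275195387262642853824796569 : ℝ) / 316912650057057350374175801344 ≤ v ^ 14 := by
                calc ((12397042945832394275195387262642853824796569 : ℝ) / 316912650057057350374175801344) = ((1197 : ℝ) / 128) ^ 14 := by norm_num
                  _ ≤ v ^ 14 := pow_le_pow_left₀ (by norm_num) hc4 14
              have hk15 : v ^ 15 ≤ (1155807062561211164492359017148064989368664205256707891304593 : ℝ) / 1427247692705959881058285969449495136382746624 := by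
                calc v ^ 15 ≤ ((10097 : ℝ) / 1024) ^ 15 := pow_le_pow_left₀ hv0 hc5 15
                  _ = (1155807062561211164492359017148064989368664205256707891304593 : ℝ) / 1427247692705959881058285969449495136382746624 := by norm_num
              linarith
            · -- v ≥ 9.8603515625
              have hk1 : v ^ 1 ≤ (987 : ℝ) / 100 := by
                calc v ^ 1 ≤ ((987 : ℝ) / 100) ^ 1 := pow_le_pow_left₀ hv0 hvt 1
                  _ = (987 : ℝ) / 100 := by norm_num
              have hk2 : (101949409 : ℝ) / 1048576 ≤ v ^ 2 := by
                calc ((101949409 : ℝ) / 1048576) = ((10097 : ℝ) / 1024) ^ 2 := by norm_num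
                  _ ≤ v ^ 2 := pow_le_pow_left₀ (by norm_num) hc5 2
              have hk3 : v ^ 3 ≤ (961504803 : ℝ) / 1000000 := by
                calc v ^ 3 ≤ ((987 : ℝ) / 100) ^ 3 := pow_le_pow_left₀ hv0 hvt 3
                  _ = (961504803 : ℝ) / 1000000 := by norm_num
              have hk4 : (10393681995449281 : ℝ) / 1099511627776 ≤ v ^ 4 := by
                calc ((10393681995449281 : ℝ) / 1099511627776) = ((10097 : ℝ) / 1024) ^ 4 := by norm_num
                  _ ≤ v ^ 4 := pow_le_pow_left₀ (by norm_num) hc5 4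
              have hk5 : v ^ 5 ≤ (936668172433707 : ℝ) / 10000000000 := by
                calc v ^ 5 ≤ ((987 : ℝ) / 100) ^ 5 := pow_le_pow_left₀ hv0 hvt 5
                  _ = (936668172433707 : ℝ) / 10000000000 := by norm_num
              have hk6 : (1059629736769994887424929 : ℝ) / 1152921504606846976 ≤ v ^ 6 := by
                calc ((1059629736769994887424929 : ℝ) / 1152921504606846976) = ((10097 : ℝ) / 1024) ^ 6 := by norm_num
                  _ ≤ v ^ 6 := pow_le_pow_left₀ (by norm_num) hc5 6
              have hk7 : v ^ 7 ≤ (912473096871571914483 : ℝ) / 100000000000000 := by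
                calc v ^ 7 ≤ ((987 : ℝ) / 100) ^ 7 := pow_le_pow_left₀ hv0 hvt 7
                  _ = (912473096871571914483 : ℝ) / 100000000000000 := by norm_num
              have hk8 : (108028625422526547705993043416961 : ℝ) / 1208925819614629174706176 ≤ v ^ 8 := by
                calc ((108028625422526547705993043416961 : ℝ) / 1208925819614629174706176) = ((10097 : ℝ) / 1024) ^ 8 := by norm_num
                  _ ≤ v ^ 8 := pow_le_pow_left₀ (by norm_num) hc5 8
              have hk9 : v ^ 9 ≤ (888903004306282340359989627 : ℝ) / 1000000000000000000 := by
                calc v ^ 9 ≤ ((987 : ℝ) / 100) ^ 9 := pow_le_pow_left₀ hv0 hvt 9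
                  _ = (888903004306282340359989627 : ℝ) / 1000000000000000000 := by norm_num
              have hk10 : (11013454516908956825436296534470514526049 : ℝ) / 1267650600228229401496703205376 ≤ v ^ 10 := by
                calc ((11013454516908956825436296534470514526049 : ℝ) / 1267650600228229401496703205376) = ((10097 : ℝ) / 1024) ^ 10 := by norm_num
                  _ ≤ v ^ 10 := pow_le_pow_left₀ (by norm_num) hc5 10
              have hk11 : v ^ 11 ≤ (865941750802046761226150734944963 : ℝ) / 10000000000000000000000 := by
                calc v ^ 11 ≤ ((987 : ℝ) / 100) ^ 11 := pow_le_pow_left₀ hv0 hvt 11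
                  _ = (865941750802046761226150734944963 : ℝ) / 10000000000000000000000 := by norm_num
              have hk12 : (1122815179047248655159746598838017083856610655041 : ℝ) / 1329227995784915872903807060280344576 ≤ v ^ 12 := by
                calc ((1122815179047248655159746598838017083856610655041 : ℝ) / 1329227995784915872903807060280344576) = ((10097 : ℝ) / 1024) ^ 12 := by norm_num
                  _ ≤ v ^ 12 := pow_le_pow_left₀ (by norm_num) hc5 12
              have hk13 : v ^ 13 ≤ (843573609437079091336918035310599660747 : ℝ) / 100000000000000000000000000 := by
                calc v ^ 13 ≤ ((987 : ℝ) / 100) ^ 13 := pow_le_pow_left₀ hv0 hvt 13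
                  _ = (843573609437079091336918035310599660747 : ℝ) / 100000000000000000000000000 := by norm_num
              have hk14 : (114470343920096183469580966341295928431084897024532820769 : ℝ) / 1393796574908163946345982392040522594123776 ≤ v ^ 14 := by
                calc ((114470343920096183469580966341295928431084897024532820769 : ℝ) / 1393796574908163946345982392040522594123776) = ((10097 : ℝ) / 1024) ^ 14 := by norm_num
                  _ ≤ v ^ 14 := pow_le_pow_left₀ (by norm_num) hc5 14
              have hk15 : v ^ 15 ≤ (821783259531709901328594105540491560910244243 : ℝ) / 1000000000000000000000000000000 := by
                calc v ^ 15 ≤ ((987 : ℝ) / 100) ^ 15 := pow_le_pow_left₀ hv0 hvt 15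
                  _ = (821783259531709901328594105540491560910244243 : ℝ) / 1000000000000000000000000000000 := by norm_num
              linarith

set_option maxHeartbeats 2000000 in
/-- Lemma: `d₀⁰(u) < 0` for `u ∈ (0, π)`. -/
theorem d00_neg :
    ∀ u ∈ Ioo 0 π,
      (1/2) * sin u * (2 * u ^ 3 * sin u + 3 * u ^ 2 * cos u + u * sin u ^ 3
        - 6 * u * sin u + 3 * cos u * sin u ^ 2) < 0 := by
  intro u hu
  obtain ⟨hu0, hupi⟩ := hu
  have hu0' : (0:ℝ) ≤ u := hu0.le
  have hs : 0 < Real.sin u := Real.sin_pos_of_pos_of_lt_pi hu0 hupi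
  have hsle : Real.sin u ≤ u - u ^ 3 / 6 + u ^ 5 / 120 - u ^ 7 / 5040 + u ^ 9 / 362880 - u ^ 11 / 39916800 + u ^ 13 / 6227020800 := by have := step13 u hu0'; linarith
  have hsge : (u - u ^ 3 / 6 + u ^ 5 / 120 - u ^ 7 / 5040 + u ^ 9 / 362880 - u ^ 11 / 39916800) ≤ Real.sin u := by have := step11 u hu0'; linarith
  have hcle : Real.cos u ≤ 1 - u ^ 2 / 2 + u ^ 4 / 24 - u ^ 6 / 720 + u ^ 8 / 40320 - u ^ 10 / 3628800 + u ^ 12 / 479001600 := by have := step12 u hu0'; linarith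
  have hcge : (1 - u ^ 2 / 2 + u ^ 4 / 24 - u ^ 6 / 720 + u ^ 8 / 40320 - u ^ 10 / 3628800) ≤ Real.cos u := by have := step10 u hu0'; linarith
  have hcube1 : Real.sin u ^ 3 ≤ (u - u ^ 3 / 6 + u ^ 5 / 120 - u ^ 7 / 5040 + u ^ 9 / 362880 - u ^ 11 / 39916800 + u ^ 13 / 6227020800) ^ 3 := cube_le hsle
  have hcube2 : (1 - u ^ 2 / 2 + u ^ 4 / 24 - u ^ 6 / 720 + u ^ 8 / 40320 - u ^ 10 / 3628800) ^ 3 ≤ Real.cos u ^ 3 := cube_le hcge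
  have h2u3 : (0:ℝ) ≤ 2 * u ^ 3 := by positivity
  have h3u2 : (0:ℝ) ≤ 3 * u ^ 2 := by positivity
  have h6u : (0:ℝ) ≤ 6 * u := by positivity
  have hA := mul_le_mul_of_nonneg_left hsle h2u3
  have hB := mul_le_mul_of_nonneg_left hcle h3u2
  have hC := mul_le_mul_of_nonneg_left hcube1 hu0'
  have hD := mul_le_mul_of_nonneg_left hsge h6u
  have hu2 : u ^ 2 ≤ 987 / 100 := by nlinarith [Real.pi_lt_d6]
  have hR : (-8 : ℝ) / 4725 + (6437 : ℝ) / 22809600 * (u ^ 2) + (-61 : ℝ) / 2661120 * (u ^ 2) ^ 2 + (4208417 : ℝ) / 3487131648000 * (u ^ 2) ^ 3 + (-322571 : ℝ) / 6974263296000 * (u ^ 2) ^ 4 + (1729087 : ℝ) / 1255367393280000 * (u ^ 2) ^ 5 + (-1747279 : ℝ) / 52725430517760000 * (u ^ 2) ^ 6 + (3051281 : ℝ) / 4639837885562880000 * (u ^ 2) ^ 7 + (-1507433 : ℝ) / 139195136566886400000 * (u ^ 2) ^ 8 + (14368699 : ℝ) / 97714985869954252800000 * (u ^ 2) ^ 9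 + (-6863 : ℝ) / 4230085968396288000000 * (u ^ 2) ^ 10 + (2791 : ℝ) / 195429971739908505600000 * (u ^ 2) ^ 11 + (-1049 : ℝ) / 10748648445694967808000000 * (u ^ 2) ^ 12 + (19 : ℝ) / 36852508956668461056000000 * (u ^ 2) ^ 13 + (-1 : ℝ) / 515935125393358454784000000 * (u ^ 2) ^ 14 + (1 : ℝ) / 241457638684091756838912000000 * (u ^ 2) ^ 15 < 0 := Rneg (u ^ 2) (by positivity) hu2
  have h10 : (0:ℝ) < u ^ 10 := by positivity
  have hQ : 2 * u ^ 3 * (u - u ^ 3 / 6 + u ^ 5 / 120 - u ^ 7 / 5040 + u ^ 9 / 362880 - u ^ 11 / 39916800 + u ^ 13 / 6227020800) + 3 * u ^ 2 * (1 - u ^ 2 / 2 + u ^ 4 / 24 - u ^ 6 / 720 + u ^ 8 / 40320 - u ^ 10 / 3628800 + u ^ 12 / 479001600) + u * (u - u ^ 3 / 6 + u ^ 5 / 120 - u ^ 7 / 5040 + u ^ 9 / 362880 - u ^ 11 / 39916800 + u ^ 13 / 6227020800) ^ 3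
      - 6 * u * (u - u ^ 3 / 6 + u ^ 5 / 120 - u ^ 7 / 5040 + u ^ 9 / 362880 - u ^ 11 / 39916800) + 3 * (1 - u ^ 2 / 2 + u ^ 4 / 24 - u ^ 6 / 720 + u ^ 8 / 40320 - u ^ 10 / 3628800 + u ^ 12 / 479001600) - 3 * (1 - u ^ 2 / 2 + u ^ 4 / 24 - u ^ 6 / 720 + u ^ 8 / 40320 - u ^ 10 / 3628800) ^ 3 < 0 := by
    have hfact : 2 * u ^ 3 * (u - u ^ 3 / 6 + u ^ 5 / 120 - u ^ 7 / 5040 + u ^ 9 / 362880 - u ^ 11 / 39916800 + u ^ 13 / 6227020800) + 3 * u ^ 2 * (1 - u ^ 2 / 2 + u ^ 4 / 24 - u ^ 6 / 720 + u ^ 8 / 40320 - u ^ 10 / 3628800 + u ^ 12 / 479001600) + u * (u - u ^ 3 / 6 + u ^ 5 / 120 - u ^ 7 / 5040 + u ^ 9 / 362880 - u ^ 11 / 39916800 + u ^ 13 / 6227020800) ^ 3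
        - 6 * u * (u - u ^ 3 / 6 + u ^ 5 / 120 - u ^ 7 / 5040 + u ^ 9 / 362880 - u ^ 11 / 39916800) + 3 * (1 - u ^ 2 / 2 + u ^ 4 / 24 - u ^ 6 / 720 + u ^ 8 / 40320 - u ^ 10 / 3628800 + u ^ 12 / 479001600) - 3 * (1 - u ^ 2 / 2 + u ^ 4 / 24 - u ^ 6 / 720 + u ^ 8 / 40320 - u ^ 10 / 3628800) ^ 3
        = u ^ 10 * ((-8 : ℝ) / 4725 + (6437 : ℝ) / 22809600 * (u ^ 2) + (-61 : ℝ) / 2661120 * (u ^ 2) ^ 2 + (4208417 : ℝ) / 3487131648000 * (u ^ 2) ^ 3 + (-322571 : ℝ) / 6974263296000 * (u ^ 2) ^ 4 + (1729087 : ℝ) / 1255367393280000 * (u ^ 2) ^ 5 + (-1747279 : ℝ) / 52725430517760000 * (u ^ 2) ^ 6 + (3051281 : ℝ) / 4639837885562880000 * (u ^ 2) ^ 7 + (-1507433 : ℝ) / 139195136566886400000 * (u ^ 2) ^ 8 + (14368699 : ℝ) / 97714985869954252800000 * (u ^ 2) ^ 9 + (-6863 : ℝ) / 4230085968396288000000 *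 (u ^ 2) ^ 10 + (2791 : ℝ) / 195429971739908505600000 * (u ^ 2) ^ 11 + (-1049 : ℝ) / 10748648445694967808000000 * (u ^ 2) ^ 12 + (19 : ℝ) / 36852508956668461056000000 * (u ^ 2) ^ 13 + (-1 : ℝ) / 515935125393358454784000000 * (u ^ 2) ^ 14 + (1 : ℝ) / 241457638684091756838912000000 * (u ^ 2) ^ 15) := by ring
    rw [hfact]
    exact mul_neg_of_pos_of_neg h10 hR
  have hpy := Real.sin_sq_add_cos_sq u
  have hrw : 3 * Real.cos u * Real.sin u ^ 2 = 3 * Real.cos u - 3 * Real.cos u ^ 3 := by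
    linear_combination (3 * Real.cos u) * hpy
  have hbr : 2 * u ^ 3 * Real.sin u + 3 * u ^ 2 * Real.cos u + u * Real.sin u ^ 3
      - 6 * u * Real.sin u + 3 * Real.cos u * Real.sin u ^ 2 < 0 := by
    rw [hrw]
    linarith
  have hneg : 0 < Real.sin u * (-(2 * u ^ 3 * Real.sin u + 3 * u ^ 2 * Real.cos u
      + u * Real.sin u ^ 3 - 6 * u * Real.sin u + 3 * Real.cos u * Real.sin u ^ 2)) :=
    mul_pos hs (by linarith)
  nlinarith [hneg]
end

section
/- For every u ∈ (0, π) one has d₀⁰(u) + d₂⁰(u) < 0, i.e. (1/2)·(−2u³ − sin u·(−2u³·sin u + u·sin³ u + cos u·(−3u² + sin² u))) < 0. -/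
/-!
Modulo `sin² u + cos² u = 1` the expression equals
`-(1/2) · (sin u - u cos u) · (u sin u + cos u (sin² u - 2u²))`, and both factors are positive
on `(0, π)`. The first is `cos u · (tan u - u)` below `π/2` and has two nonnegative summands above.
The second is trivially positive where `cos u ≤ 0`; where `cos u > 0` it is increasing in `sin u`,
so the Taylor bounds `sin u ≥ u - u³/6` and `cos u ≤ 1 - u²/2 + u⁴/24` reduce it to the polynomial
`u⁶ (132 - 24u² + u⁴) / 864`, which is positive for `u < π/2`.
-/

open Set Real

namespace Real

/-- The half-angle formula turns `sin (x/2) ≥ x/2 - (x/2)³/6` into this bound, with room to spare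
of `x⁶/1152`. -/
theorem cos_le_one_sub_sq_div_two_add_pow_four_div (x : ℝ) :
    cos x ≤ 1 - x ^ 2 / 2 + x ^ 4 / 24 := by
  wlog hx : 0 ≤ x generalizing x
  · simpa [cos_abs, sq_abs, Even.pow_abs (by decide : Even 4)] using this |x| (abs_nonneg x)
  rcases le_or_gt (x ^ 2) 24 with hsmall | hlarge
  · set p := x / 2 - (x / 2) ^ 3 / 6 with hp_def
    have hp : 0 ≤ p := by nlinarith [mul_nonneg hx (sub_nonneg.2 hsmall)]
    have hsin : p ≤ sin (x / 2) := sin_ge_sub_cube (by positivity)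
    have hcos : cos x = 1 - 2 * sin (x / 2) ^ 2 := by
      rw [← cos_two_mul_eq_one_sub, mul_div_cancel₀ x two_ne_zero]
    rw [hcos]
    nlinarith [pow_le_pow_left₀ hp hsin 2, pow_nonneg hx 6, hp_def]
  · nlinarith [cos_le_one x]

theorem sin_sub_mul_cos_pos {x : ℝ} (hx₀ : 0 < x) (hxπ : x < π) : 0 < sin x - x * cos x := by
  have hsin : 0 < sin x := sin_pos_of_pos_of_lt_pi hx₀ hxπ
  rcases le_or_gt (cos x) 0 with hcos | hcos
  · nlinarith
  · have hx : x < π / 2 := by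
      by_contra! h
      exact hcos.not_ge (cos_nonpos_of_pi_div_two_le_of_le h (by linarith))
    have htan := lt_tan hx₀ hx
    rw [tan_eq_sin_div_cos, lt_div_iff₀ hcos] at htan
    linarith

theorem mul_sin_add_cos_mul_sin_sq_sub_two_mul_sq_pos {x : ℝ} (hx₀ : 0 < x) (hxπ : x < π) :
    0 < x * sin x + cos x * (sin x ^ 2 - 2 * x ^ 2) := by
  have hsin : 0 < sin x := sin_pos_of_pos_of_lt_pi hx₀ hxπ
  have hsin_le : sin x ≤ x := sin_le hx₀.le
  rcases le_or_gt (cos x) 0 with hcos | hcos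
  · nlinarith [mul_nonneg (neg_nonneg.2 hcos) (by nlinarith : 0 ≤ 2 * x ^ 2 - sin x ^ 2)]
  have hx : x < 1.5708 := by
    have : x < π / 2 := by
      by_contra! h
      exact hcos.not_ge (cos_nonpos_of_pi_div_two_le_of_le h (by linarith))
    linarith [pi_lt_d6]
  set p := x - x ^ 3 / 6 with hp_def
  set C := 1 - x ^ 2 / 2 + x ^ 4 / 24
  have hp : 0 ≤ p := by nlinarith [mul_pos hx₀ (by nlinarith : 0 < 6 - x ^ 2)]
  have hp_le : p ≤ sin x := sin_ge_sub_cube hx₀.le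
  have hC : cos x ≤ C := cos_le_one_sub_sq_div_two_add_pow_four_div x
  have hmono : x * p + cos x * (p ^ 2 - 2 * x ^ 2)
      ≤ x * sin x + cos x * (sin x ^ 2 - 2 * x ^ 2) := by
    nlinarith [mul_nonneg (sub_nonneg.2 hp_le) (by positivity : 0 ≤ x + cos x * (sin x + p))]
  have hcos_le : C * (p ^ 2 - 2 * x ^ 2) ≤ cos x * (p ^ 2 - 2 * x ^ 2) :=
    mul_le_mul_of_nonpos_right hC (by nlinarith)
  have hpoly : x * p + C * (p ^ 2 - 2 * x ^ 2) = x ^ 6 * (132 - 24 * x ^ 2 + x ^ 4) / 864 := by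
    ring
  have hpoly_pos : 0 < x ^ 6 * (132 - 24 * x ^ 2 + x ^ 4) / 864 := by
    have : 0 < 132 - 24 * x ^ 2 + x ^ 4 := by nlinarith
    positivity
  linarith

end Real

/-- Lemma: `d₀⁰(u) + d₂⁰(u) < 0` for `u ∈ (0, π)`. -/
theorem d00_add_d20_neg :
    ∀ u ∈ Ioo 0 π,
      (1/2) * (-2 * u ^ 3 - sin u * (-2 * u ^ 3 * sin u + u * sin u ^ 3
        + cos u * (-3 * u ^ 2 + sin u ^ 2))) < 0 := by
  rintro u ⟨hu₀, huπ⟩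
  have hprod := mul_pos (sin_sub_mul_cos_pos hu₀ huπ)
    (mul_sin_add_cos_mul_sin_sq_sub_two_mul_sq_pos hu₀ huπ)
  linear_combination (1 / 2) * hprod + (u ^ 3 - u * sin u ^ 2 / 2) * sin_sq_add_cos_sq u
end

section
/- For every k ∈ (0, 1) one has f₃(k) := E(k)² + 2(k² − 1)·E(k)·K(k) − (k² − 1)·K(k)² > 0. -/
open Set Real

/-- Complete elliptic integral of the first kind. -/
noncomputable def ellK (k : ℝ) : ℝ :=
  ∫ t in (0:ℝ)..(π/2), 1 / Real.sqrt (1 - k ^ 2 * sin t ^ 2)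

/-- Complete elliptic integral of the second kind. -/
noncomputable def ellE (k : ℝ) : ℝ :=
  ∫ t in (0:ℝ)..(π/2), Real.sqrt (1 - k ^ 2 * sin t ^ 2)

lemma ellK_pos {k : ℝ} (hk : k ∈ Ioo (0:ℝ) 1) : 0 < ellK k := by
  obtain ⟨hk0, hk1⟩ := hk
  have harg : ∀ t : ℝ, 0 < 1 - k ^ 2 * sin t ^ 2 := by
    intro t
    nlinarith [sin_sq_le_one t, sq_nonneg (sin t), sq_nonneg k]
  have hcont : Continuous fun t : ℝ => 1 / Real.sqrt (1 - k ^ 2 * sin t ^ 2) := by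
    apply Continuous.div continuous_const
    · exact (continuous_const.sub (continuous_const.mul ((continuous_sin).pow 2))).sqrt
    · intro t
      exact ne_of_gt (Real.sqrt_pos.mpr (harg t))
  apply intervalIntegral.intervalIntegral_pos_of_pos
    (hcont.intervalIntegrable 0 (π/2))
  · intro x
    exact div_pos one_pos (Real.sqrt_pos.mpr (harg x))
  · positivity

/-- Lemma: `f₃(k) = E(k)² + 2(k² − 1)E(k)K(k) − (k² − 1)K(k)² > 0` for `k ∈ (0,1)`. -/
theorem f3_pos :
    ∀ k ∈ Ioo (0:ℝ) 1,
      0 < ellE k ^ 2 + 2 * (k ^ 2 - 1) * ellE k * ellK k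
          - (k ^ 2 - 1) * ellK k ^ 2 := by
  intro k hk
  have hK := ellK_pos hk
  obtain ⟨hk0, hk1⟩ := hk
  nlinarith [sq_nonneg (ellE k - (1 - k ^ 2) * ellK k), mul_pos hK hK,
    mul_pos (mul_pos hk0 hk0) (mul_pos hK hK), sq_nonneg k,
    mul_pos (mul_pos (mul_pos hk0 hk0) (sub_pos.mpr (by nlinarith : k ^ 2 < 1))) (mul_pos hK hK)]
end

section
/- For every u ∈ (0, π/2) one has f₁(u) := 8u + 4u·cos(4u) − 3·sin(4u) > 0. -/
/-!
With `t = 4u` the claim reads `g t := 2t + t cos t - 3 sin t > 0`. For `t > π` this is clear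
from `t cos t ≥ -t` and `sin t ≤ 1`, since `t - 3 > 0`. On `(0, π]` one differentiates three
times: `g' = 2 - 2 cos t - t sin t`, whose derivative is `sin t - t cos t`, whose derivative
is `t sin t > 0`; all three functions vanish at `0`, so each is positive on `(0, π]`.
-/

open Set Real

lemma pos_of_hasDerivAt_of_deriv_pos {f f' : ℝ → ℝ} {a b t : ℝ}
    (hf : ∀ x, HasDerivAt f (f' x) x) (ha : f a = 0) (hf' : ∀ x ∈ Ioo a b, 0 < f' x)
    (ht : t ∈ Ioc a b) : 0 < f t := by
  have hmono : StrictMonoOn f (Icc a b) :=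
    strictMonoOn_of_deriv_pos (convex_Icc a b)
      (fun x _ => (hf x).continuousAt.continuousWithinAt)
      (fun x hx => by
        rw [interior_Icc] at hx
        rw [(hf x).deriv]
        exact hf' x hx)
  simpa [ha] using hmono (left_mem_Icc.2 (ht.1.le.trans ht.2)) (Ioc_subset_Icc_self ht) ht.1

lemma sin_sub_mul_cos_pos {t : ℝ} (ht : t ∈ Ioc 0 π) : 0 < sin t - t * cos t := by
  refine pos_of_hasDerivAt_of_deriv_pos (f := fun x => sin x - x * cos x)
    (f' := fun x => x * sin x) (fun x => ?_) (by simp)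
    (fun x hx => mul_pos hx.1 (sin_pos_of_pos_of_lt_pi hx.1 hx.2)) ht
  exact ((hasDerivAt_sin x).sub ((hasDerivAt_id' x).mul (hasDerivAt_cos x))).congr_deriv
    (by ring)

lemma two_sub_two_mul_cos_sub_mul_sin_pos {t : ℝ} (ht : t ∈ Ioc 0 π) :
    0 < 2 - 2 * cos t - t * sin t := by
  refine pos_of_hasDerivAt_of_deriv_pos (f := fun x => 2 - 2 * cos x - x * sin x)
    (f' := fun x => sin x - x * cos x) (fun x => ?_) (by simp)
    (fun x hx => sin_sub_mul_cos_pos (Ioo_subset_Ioc_self hx)) ht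
  exact (((hasDerivAt_const x 2).sub ((hasDerivAt_cos x).const_mul 2)).sub
    ((hasDerivAt_id' x).mul (hasDerivAt_sin x))).congr_deriv (by ring)

lemma two_mul_add_mul_cos_sub_three_mul_sin_pos_of_le_pi {t : ℝ} (ht : t ∈ Ioc 0 π) :
    0 < 2 * t + t * cos t - 3 * sin t := by
  refine pos_of_hasDerivAt_of_deriv_pos (f := fun x => 2 * x + x * cos x - 3 * sin x)
    (f' := fun x => 2 - 2 * cos x - x * sin x) (fun x => ?_) (by simp)
    (fun x hx => two_sub_two_mul_cos_sub_mul_sin_pos (Ioo_subset_Ioc_self hx)) ht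
  exact ((((hasDerivAt_id' x).const_mul 2).add ((hasDerivAt_id' x).mul (hasDerivAt_cos x))).sub
    ((hasDerivAt_sin x).const_mul 3)).congr_deriv (by ring)

lemma two_mul_add_mul_cos_sub_three_mul_sin_pos {t : ℝ} (ht : 0 < t) :
    0 < 2 * t + t * cos t - 3 * sin t := by
  rcases le_or_gt t π with hπ | hπ
  · exact two_mul_add_mul_cos_sub_three_mul_sin_pos_of_le_pi ⟨ht, hπ⟩
  · nlinarith [neg_one_le_cos t, sin_le_one t, pi_gt_three]

/-- Lemma: `f₁(u) = 8u + 4u·cos(4u) − 3·sin(4u) > 0` for `u ∈ (0, π/2)`. -/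
theorem f1_pos :
    ∀ u ∈ Ioo 0 (π/2), 0 < 8 * u + 4 * u * cos (4 * u) - 3 * sin (4 * u) := by
  intro u hu
  linarith [two_mul_add_mul_cos_sub_three_mul_sin_pos (mul_pos four_pos hu.1)]
end

section
/- For every u ∈ (0, π/2) one has D₀(u) > 0, where D₀(u) = (1/8)·cos u·sin u·((−48u² − 3)·cos(2u) + 3·cos(6u) + (42u − 64u³)·sin(2u) + 2u·sin(6u)). -/
/-!
With `t = 2u` one has `D₀(u) = sin t · g(t) / 4`, where
`g(t) = 3 (sin t - t cos t)(t - sin t cos t) - 2 t sin t (t - sin t)(t + sin t)` (`reducedD0`),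
so it suffices to show `g > 0` on `(0, π)`. The partial sums of the Maclaurin series of `sin` and
`cos` bound them alternately from above and below on `[0, ∞)` (integrate the previous bound once).
On `(0, 11/5]` every factor of `g` is positive, so bounding each of them by partial sums of degree
at most 13 bounds `g` from below by a polynomial, which is positive there. On `[11/5, π)` one
reflects, `r = π - t`, and bounds `sin r` from above and `cos r` from below by partial sums of
degree 5 and 6 at the point `3.141593 - t ≥ r`; this leaves a positive polynomial in `t`.
-/

open Set Real Finset
open scoped Nat

noncomputable def sinTaylor (n : ℕ) (x : ℝ) : ℝ :=
  ∑ k ∈ range n, (-1) ^ k * x ^ (2 * k + 1) / (2 * k + 1)!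

noncomputable def cosTaylor (n : ℕ) (x : ℝ) : ℝ :=
  ∑ k ∈ range n, (-1) ^ k * x ^ (2 * k) / (2 * k)!

lemma sinTaylor_zero_right (n : ℕ) : sinTaylor n 0 = 0 := by
  simp [sinTaylor]

lemma cosTaylor_succ_zero_right (n : ℕ) : cosTaylor (n + 1) 0 = 1 := by
  simp [cosTaylor, sum_range_succ']

lemma hasDerivAt_sinTaylor (n : ℕ) (x : ℝ) : HasDerivAt (sinTaylor n) (cosTaylor n x) x := by
  refine (HasDerivAt.fun_sum fun k _ =>
    ((hasDerivAt_pow (2 * k + 1) x).const_mul ((-1 : ℝ) ^ k)).div_const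
      ((2 * k + 1)! : ℝ)).congr_deriv (sum_congr rfl fun k _ => ?_)
  rw [Nat.factorial_succ]
  push_cast
  field_simp

lemma hasDerivAt_cosTaylor (n : ℕ) (x : ℝ) :
    HasDerivAt (cosTaylor (n + 1)) (-sinTaylor n x) x := by
  have h : cosTaylor (n + 1) =
      fun y => ∑ k ∈ range n, (-1 : ℝ) ^ (k + 1) * y ^ (2 * k + 2) / (2 * k + 2)! + 1 := by
    funext y
    simp [cosTaylor, sum_range_succ', mul_add]
  rw [h, sinTaylor, ← sum_neg_distrib]
  refine ((HasDerivAt.fun_sum fun k _ =>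
    ((hasDerivAt_pow (2 * k + 2) x).const_mul ((-1 : ℝ) ^ (k + 1))).div_const
      ((2 * k + 2)! : ℝ)).add_const 1).congr_deriv (sum_congr rfl fun k _ => ?_)
  rw [Nat.factorial_succ]
  push_cast
  field_simp
  ring

lemma nonneg_of_hasDerivAt_nonneg {f f' : ℝ → ℝ} (hf : ∀ x, HasDerivAt f (f' x) x)
    (h0 : f 0 = 0) (hf' : ∀ x, 0 ≤ x → 0 ≤ f' x) {x : ℝ} (hx : 0 ≤ x) : 0 ≤ f x := by
  have hmono : MonotoneOn f (Ici 0) :=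
    monotoneOn_of_hasDerivWithinAt_nonneg (convex_Ici 0)
      (fun y _ => (hf y).continuousAt.continuousWithinAt) (fun y _ => (hf y).hasDerivWithinAt)
      (fun y hy => hf' y (interior_subset hy))
  simpa [h0] using hmono self_mem_Ici hx hx

lemma sinTaylor_sub_sin_alternating_of_cos {n : ℕ}
    (hcos : ∀ x, 0 ≤ x → 0 ≤ (-1) ^ n * (cosTaylor (n + 1) x - cos x)) {x : ℝ} (hx : 0 ≤ x) :
    0 ≤ (-1) ^ n * (sinTaylor (n + 1) x - sin x) :=
  nonneg_of_hasDerivAt_nonneg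
    (fun y => ((hasDerivAt_sinTaylor _ y).sub (hasDerivAt_sin y)).const_mul _)
    (by simp [sinTaylor_zero_right]) hcos hx

theorem cosTaylor_sub_cos_alternating (n : ℕ) {x : ℝ} (hx : 0 ≤ x) :
    0 ≤ (-1) ^ n * (cosTaylor (n + 1) x - cos x) := by
  induction n generalizing x with
  | zero => simpa [cosTaylor] using cos_le_one x
  | succ n ih =>
    refine nonneg_of_hasDerivAt_nonneg
      (fun y => ((hasDerivAt_cosTaylor _ y).sub (hasDerivAt_cos y)).const_mul _)
      (by simp [cosTaylor_succ_zero_right]) (fun y hy => ?_) hx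
    convert sinTaylor_sub_sin_alternating_of_cos (fun _ => ih) hy using 1
    ring

theorem sinTaylor_sub_sin_alternating (n : ℕ) {x : ℝ} (hx : 0 ≤ x) :
    0 ≤ (-1) ^ n * (sinTaylor (n + 1) x - sin x) :=
  sinTaylor_sub_sin_alternating_of_cos (fun _ => cosTaylor_sub_cos_alternating n) hx

theorem sin_le_sinTaylor (m : ℕ) {x : ℝ} (hx : 0 ≤ x) : sin x ≤ sinTaylor (2 * m + 1) x := by
  simpa [pow_mul] using sinTaylor_sub_sin_alternating (2 * m) hx

theorem sinTaylor_le_sin (m : ℕ) {x : ℝ} (hx : 0 ≤ x) : sinTaylor (2 * m + 2) x ≤ sin x := by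
  simpa [pow_succ, pow_mul] using sinTaylor_sub_sin_alternating (2 * m + 1) hx

theorem cos_le_cosTaylor (m : ℕ) {x : ℝ} (hx : 0 ≤ x) : cos x ≤ cosTaylor (2 * m + 1) x := by
  simpa [pow_mul] using cosTaylor_sub_cos_alternating (2 * m) hx

theorem cosTaylor_le_cos (m : ℕ) {x : ℝ} (hx : 0 ≤ x) : cosTaylor (2 * m + 2) x ≤ cos x := by
  simpa [pow_succ, pow_mul] using cosTaylor_sub_cos_alternating (2 * m + 1) hx

lemma pow_add_two_le_mul {t c : ℝ} (ht : 0 ≤ t) (htc : t ^ 2 ≤ c) (k : ℕ) :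
    t ^ (k + 2) ≤ c * t ^ k := by
  rw [pow_add, mul_comm]
  exact mul_le_mul_of_nonneg_right htc (pow_nonneg ht k)

/-- Both products are of order `t⁶` at `0`, yet `reducedD0 t = 8 t¹⁰ / 4725 + O(t¹²)`: this
cancellation is why partial sums of high degree are needed near `0`. -/
noncomputable def reducedD0 (t : ℝ) : ℝ :=
  3 * (sin t - t * cos t) * (t - sin t * cos t) - 2 * t * sin t * (t - sin t) * (t + sin t)

lemma D0_eq_sin_mul_reducedD0 (u : ℝ) :
    (1/8) * cos u * sin u *
        ((-48 * u ^ 2 - 3) * cos (2 * u) + 3 * cos (6 * u)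
          + (42 * u - 64 * u ^ 3) * sin (2 * u) + 2 * u * sin (6 * u)) =
      sin (2 * u) * reducedD0 (2 * u) / 4 := by
  rw [show 6 * u = 3 * (2 * u) by ring, cos_three_mul, sin_three_mul, reducedD0]
  linear_combination
    (-((-48 * u ^ 2 - 3) * cos (2 * u) + 3 * (4 * cos (2 * u) ^ 3 - 3 * cos (2 * u))
        + (42 * u - 64 * u ^ 3) * sin (2 * u)
        + 2 * u * (3 * sin (2 * u) - 4 * sin (2 * u) ^ 3)) / 16) * sin_two_mul u
      - sin (2 * u) * (24 * u * sin (2 * u) - 12 * cos (2 * u)) / 16 * sin_sq_add_cos_sq (2 * u)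

lemma reducedD0_eq (t : ℝ) :
    reducedD0 t = t * sin t * (6 - 2 * t ^ 2 - sin t ^ 2) - 3 * cos t * (t ^ 2 + sin t ^ 2) := by
  rw [reducedD0]
  linear_combination (3 * t * sin t) * sin_sq_add_cos_sq t

lemma reducedD0_taylor_bound_pos_of_le {t : ℝ} (ht0 : 0 < t) (ht : t ≤ 11 / 5) :
    0 ≤ sinTaylor 6 t - t * cosTaylor 7 t ∧ 0 ≤ t - sinTaylor 5 (2 * t) / 2 ∧
    0 < 3 * (sinTaylor 6 t - t * cosTaylor 7 t) * (t - sinTaylor 5 (2 * t) / 2)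
      - 2 * t * sinTaylor 5 t * (t - sinTaylor 6 t) * (t + sinTaylor 5 t) := by
  have h := pow_add_two_le_mul ht0.le (show t ^ 2 ≤ 121 / 25 by nlinarith)
  have p := fun k => pow_pos ht0 k
  simp only [sinTaylor, cosTaylor, sum_range_succ, sum_range_zero, Nat.factorial]
  norm_num
  refine ⟨?_, ?_, ?_⟩
  · linarith [h 3, h 5, h 7, h 9, h 11, p 3, p 5, p 7, p 9, p 11]
  · linarith [h 3, h 7, p 3, p 7]
  · linarith [h 10, h 12, h 14, h 16, h 18, h 20, h 22, h 24, h 26, h 28,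
      p 10, p 12, p 14, p 16, p 18, p 20, p 22, p 24, p 26, p 28, p 30]

lemma reducedD0_taylor_bound_pos_of_ge {t : ℝ} (ht : 11 / 5 ≤ t) (ht' : t ≤ 3141593 / 1000000) :
    0 < 3 * t ^ 2 * cosTaylor 4 (3141593 / 1000000 - t)
      - t * sinTaylor 3 (3141593 / 1000000 - t)
        * (2 * t ^ 2 - 6 + sinTaylor 3 (3141593 / 1000000 - t) ^ 2) := by
  obtain ⟨d, hd0, hd, rfl⟩ : ∃ d, 0 ≤ d ∧ d ≤ 941593 / 1000000 ∧ t = 11 / 5 + d :=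
    ⟨t - 11 / 5, by linarith, by linarith, by ring⟩
  have e := fun k => pow_le_pow_left₀ hd0 hd k
  have p := fun k => pow_nonneg hd0 k
  simp only [sinTaylor, cosTaylor, sum_range_succ, sum_range_zero, Nat.factorial]
  norm_num
  linarith [p 1, p 2, p 3, p 4, p 5, p 9, p 10, p 13, p 14, p 16,
    e 6, e 7, e 8, e 11, e 12, e 15]

lemma reducedD0_pos_of_le {t : ℝ} (ht0 : 0 < t) (ht : t ≤ 11 / 5) : 0 < reducedD0 t := by
  obtain ⟨hAL, hBL, hQ⟩ := reducedD0_taylor_bound_pos_of_le ht0 ht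
  have hs : 0 ≤ sin t := sin_nonneg_of_nonneg_of_le_pi ht0.le (by linarith [pi_gt_three])
  have hts : 0 ≤ t - sin t := by linarith [sin_le ht0.le]
  have hS : sin t ≤ sinTaylor 5 t := sin_le_sinTaylor 2 ht0.le
  have hD : t - sin t ≤ t - sinTaylor 6 t := by linarith [sinTaylor_le_sin 2 ht0.le]
  have hA : sinTaylor 6 t - t * cosTaylor 7 t ≤ sin t - t * cos t := by
    linarith [sinTaylor_le_sin 2 ht0.le,
      mul_le_mul_of_nonneg_left (cos_le_cosTaylor 3 ht0.le) ht0.le]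
  have hB : t - sinTaylor 5 (2 * t) / 2 ≤ t - sin t * cos t := by
    have := sin_le_sinTaylor 2 (by linarith : (0 : ℝ) ≤ 2 * t)
    rw [sin_two_mul] at this
    linarith
  have hAB : (sinTaylor 6 t - t * cosTaylor 7 t) * (t - sinTaylor 5 (2 * t) / 2)
      ≤ (sin t - t * cos t) * (t - sin t * cos t) :=
    mul_le_mul hA hB hBL (hAL.trans hA)
  have hSD : sin t * (t - sin t) * (t + sin t)
      ≤ sinTaylor 5 t * (t - sinTaylor 6 t) * (t + sinTaylor 5 t) := by
    have := hs.trans hS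
    have := hts.trans hD
    gcongr
  rw [reducedD0]
  linarith [mul_le_mul_of_nonneg_left hSD ht0.le]

lemma reducedD0_pos_of_ge {t : ℝ} (ht : 11 / 5 ≤ t) (htπ : t < π) : 0 < reducedD0 t := by
  have hπ := pi_lt_d6
  have hW := reducedD0_taylor_bound_pos_of_ge ht (by linarith)
  set ρ : ℝ := 3141593 / 1000000 - t with hρ_def
  have hr : 0 ≤ π - t := by linarith
  have hrρ : π - t ≤ ρ := by linarith
  have hρ : ρ ≤ π / 2 := by linarith [pi_gt_three]
  have hs : 0 ≤ sin t := sin_nonneg_of_nonneg_of_le_pi (by linarith) htπ.le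
  have hc : 0 ≤ -cos t := by
    rw [← cos_pi_sub]
    exact cos_nonneg_of_mem_Icc ⟨by linarith, by linarith⟩
  have hS : sin t ≤ sinTaylor 3 ρ := calc
    sin t = sin (π - t) := (sin_pi_sub t).symm
    _ ≤ sin ρ := sin_le_sin_of_le_of_le_pi_div_two (by linarith) hρ hrρ
    _ ≤ sinTaylor 3 ρ := sin_le_sinTaylor 1 (hr.trans hrρ)
  have hC : cosTaylor 4 ρ ≤ -cos t := calc
    cosTaylor 4 ρ ≤ cos ρ := cosTaylor_le_cos 1 (hr.trans hrρ)
    _ ≤ cos (π - t) := cos_le_cos_of_nonneg_of_le_pi hr (by linarith) hrρ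
    _ = -cos t := cos_pi_sub t
  have hsS : t * sin t * (2 * t ^ 2 - 6 + sin t ^ 2)
      ≤ t * sinTaylor 3 ρ * (2 * t ^ 2 - 6 + sinTaylor 3 ρ ^ 2) := by
    have : 0 ≤ 2 * t ^ 2 - 6 := by nlinarith
    have : 0 ≤ t * sinTaylor 3 ρ := mul_nonneg (by linarith) (hs.trans hS)
    gcongr
  rw [reducedD0_eq]
  linarith [mul_le_mul_of_nonneg_left hC (by positivity : (0 : ℝ) ≤ 3 * t ^ 2),
    mul_nonneg hc (sq_nonneg (sin t))]

lemma reducedD0_pos {t : ℝ} (ht0 : 0 < t) (htπ : t < π) : 0 < reducedD0 t := by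
  rcases le_total t (11 / 5) with ht | ht
  · exact reducedD0_pos_of_le ht0 ht
  · exact reducedD0_pos_of_ge ht htπ

/-- Lemma: `D₀(u) > 0` for `u ∈ (0, π/2)`. -/
theorem D0_pos :
    ∀ u ∈ Ioo 0 (π/2),
      0 < (1/8) * cos u * sin u *
        ((-48 * u ^ 2 - 3) * cos (2 * u) + 3 * cos (6 * u)
          + (42 * u - 64 * u ^ 3) * sin (2 * u) + 2 * u * sin (6 * u)) := by
  rintro u ⟨hu0, huπ⟩
  have ht0 : 0 < 2 * u := by linarith
  have htπ : 2 * u < π := by linarith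
  rw [D0_eq_sin_mul_reducedD0]
  have := sin_pos_of_pos_of_lt_pi ht0 htπ
  have := reducedD0_pos ht0 htπ
  positivity
end

section
/- For every k ∈ (0, 1) one has f₄(k) := E(k)² − (1 − k²)·K(k)² > 0; equivalently, E(k) > √(1 − k²)·K(k). -/
open Set Real

/-!
Write `Δ(t) = √(1 - k² sin² t)` and `c = √(1 - k²)`, so that `E - cK = ∫₀^{π/2} (Δ - c/Δ)`,
whose integrand changes sign. The substitution `t ↦ π/2 - t` swaps `sin` and `cos`, so with
`a = Δ(t)` and `b = Δ(π/2 - t)` twice this integral is `∫ (a - c/a + b - c/b) = ∫ (a + b)(ab - c)/(ab)`,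
which is positive since `a²b² = 1 - k² + k⁴ sin² t cos² t > c²` for `0 < t < π/2`.
Finally `E² - (1 - k²)K² = (E - cK)(E + cK)`.
-/

lemma integral_comp_sin_eq_integral_comp_cos (g : ℝ → ℝ) :
    ∫ t in (0:ℝ)..π/2, g (sin t) = ∫ t in (0:ℝ)..π/2, g (cos t) := by
  simpa [cos_pi_div_two_sub] using
    intervalIntegral.integral_comp_sub_left (a := 0) (b := π / 2) (fun t => g (cos t)) (π / 2)

lemma one_sub_sq_mul_sq_pos {k x : ℝ} (hk : k ^ 2 < 1) (hx : x ^ 2 ≤ 1) :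
    0 < 1 - k ^ 2 * x ^ 2 := by
  nlinarith [sq_nonneg k]

lemma sqrt_one_sub_sq_lt_sqrt_mul_sqrt {k s c : ℝ} (hk : k ^ 2 ≤ 1) (hk0 : k ≠ 0)
    (hs : s ≠ 0) (hc : c ≠ 0) (hsc : s ^ 2 + c ^ 2 = 1) :
    √(1 - k ^ 2) < √(1 - k ^ 2 * s ^ 2) * √(1 - k ^ 2 * c ^ 2) := by
  rw [← sqrt_mul (by nlinarith [sq_nonneg c])]
  refine sqrt_lt_sqrt (by linarith) ?_
  have hprod : (1 - k ^ 2 * s ^ 2) * (1 - k ^ 2 * c ^ 2) = 1 - k ^ 2 + (k ^ 2 * s * c) ^ 2 := by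
    linear_combination (-k ^ 2) * hsc
  rw [hprod]
  have : 0 < (k ^ 2 * s * c) ^ 2 := by positivity
  linarith

lemma sub_div_add_sub_div_pos {a b c : ℝ} (ha : 0 < a) (hb : 0 < b) (h : c < a * b) :
    0 < a - c / a + (b - c / b) := by
  have key : a - c / a + (b - c / b) = (a + b) * (a * b - c) / (a * b) := by
    field_simp
    ring
  rw [key]
  have := sub_pos.2 h
  positivity

lemma ellK_nonneg (k : ℝ) : 0 ≤ ellK k :=
  intervalIntegral.integral_nonneg (by positivity) fun t _ => by positivity

noncomputable def ellGap (k x : ℝ) : ℝ :=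
  √(1 - k ^ 2 * x ^ 2) - √(1 - k ^ 2) / √(1 - k ^ 2 * x ^ 2)

section
variable {k : ℝ}

lemma continuous_ellGap_comp {u : ℝ → ℝ} (hk : k ^ 2 < 1) (hu : Continuous u)
    (hu1 : ∀ t, u t ^ 2 ≤ 1) : Continuous fun t => ellGap k (u t) := by
  have hΔ : Continuous fun t => √(1 - k ^ 2 * u t ^ 2) := by fun_prop
  exact hΔ.sub <| continuous_const.div hΔ fun t =>
    (sqrt_pos.2 (one_sub_sq_mul_sq_pos hk (hu1 t))).ne'

lemma ellE_sub_sqrt_mul_ellK (hk : k ^ 2 < 1) :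
    ellE k - √(1 - k ^ 2) * ellK k = ∫ t in (0:ℝ)..π/2, ellGap k (sin t) := by
  have hΔ : Continuous fun t => √(1 - k ^ 2 * sin t ^ 2) := by fun_prop
  have hgap := continuous_ellGap_comp hk continuous_sin sin_sq_le_one
  have hdiv : Continuous fun t => √(1 - k ^ 2) * (1 / √(1 - k ^ 2 * sin t ^ 2)) :=
    (hΔ.sub hgap).congr fun t => by simp only [Pi.sub_apply, ellGap, sub_sub_cancel, mul_one_div]
  rw [ellE, ellK, ← intervalIntegral.integral_const_mul,
    ← intervalIntegral.integral_sub (hΔ.intervalIntegrable _ _) (hdiv.intervalIntegrable _ _)]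
  simp only [ellGap, mul_one_div]

lemma two_mul_ellE_sub_sqrt_mul_ellK (hk : k ^ 2 < 1) :
    2 * (ellE k - √(1 - k ^ 2) * ellK k) =
      ∫ t in (0:ℝ)..π/2, (ellGap k (sin t) + ellGap k (cos t)) := by
  rw [intervalIntegral.integral_add
    ((continuous_ellGap_comp hk continuous_sin sin_sq_le_one).intervalIntegrable _ _)
    ((continuous_ellGap_comp hk continuous_cos cos_sq_le_one).intervalIntegrable _ _),
    ← integral_comp_sin_eq_integral_comp_cos, ellE_sub_sqrt_mul_ellK hk]
  ring

lemma ellGap_sin_add_ellGap_cos_pos (hk : k ^ 2 < 1) (hk0 : k ≠ 0) {t : ℝ}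
    (ht : t ∈ Ioo 0 (π / 2)) : 0 < ellGap k (sin t) + ellGap k (cos t) := by
  have hs : sin t ≠ 0 := (sin_pos_of_pos_of_lt_pi ht.1 (by linarith [pi_pos, ht.2])).ne'
  have hc : cos t ≠ 0 := (cos_pos_of_mem_Ioo ⟨by linarith [pi_pos, ht.1], ht.2⟩).ne'
  exact sub_div_add_sub_div_pos (sqrt_pos.2 (one_sub_sq_mul_sq_pos hk (sin_sq_le_one t)))
    (sqrt_pos.2 (one_sub_sq_mul_sq_pos hk (cos_sq_le_one t)))
    (sqrt_one_sub_sq_lt_sqrt_mul_sqrt hk.le hk0 hs hc (sin_sq_add_cos_sq t))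

lemma sqrt_mul_ellK_lt_ellE (hk : k ^ 2 < 1) (hk0 : k ≠ 0) :
    √(1 - k ^ 2) * ellK k < ellE k := by
  have hpos : 0 < ∫ t in (0:ℝ)..π/2, (ellGap k (sin t) + ellGap k (cos t)) :=
    intervalIntegral.intervalIntegral_pos_of_pos_on
      (((continuous_ellGap_comp hk continuous_sin sin_sq_le_one).add
        (continuous_ellGap_comp hk continuous_cos cos_sq_le_one)).intervalIntegrable _ _)
      (fun t ht => ellGap_sin_add_ellGap_cos_pos hk hk0 ht) (by positivity)
  linarith [two_mul_ellE_sub_sqrt_mul_ellK hk]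

end

/-- Lemma: `f₄(k) = E(k)² − (1 − k²)K(k)² > 0`, i.e. `E(k) > √(1−k²)·K(k)`,
for `k ∈ (0,1)`. -/
theorem f4_pos :
    ∀ k ∈ Ioo (0:ℝ) 1,
      0 < ellE k ^ 2 - (1 - k ^ 2) * ellK k ^ 2 ∧
      Real.sqrt (1 - k ^ 2) * ellK k < ellE k := by
  rintro k ⟨hk0, hk1⟩
  have hk : k ^ 2 < 1 := by nlinarith
  have hlt := sqrt_mul_ellK_lt_ellE hk hk0.ne'
  have hcK : 0 ≤ √(1 - k ^ 2) * ellK k := mul_nonneg (sqrt_nonneg _) (ellK_nonneg k)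
  have hsq : √(1 - k ^ 2) ^ 2 = 1 - k ^ 2 := sq_sqrt (by linarith)
  refine ⟨?_, hlt⟩
  calc (0:ℝ) < ellE k ^ 2 - (√(1 - k ^ 2) * ellK k) ^ 2 := by nlinarith
    _ = ellE k ^ 2 - (1 - k ^ 2) * ellK k ^ 2 := by rw [mul_pow, hsq]
end

section
/- For every k ∈ (0, 1) one has 2E(k) < (2 − k²)·K(k). -/
open Set Real

/-- For every `k ∈ (0,1)`: `2E(k) < (2 − k²)K(k)`. -/
theorem two_E_lt :
    ∀ k ∈ Ioo (0:ℝ) 1, 2 * ellE k < (2 - k ^ 2) * ellK k := by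
  rintro k ⟨hk0, hk1⟩
  have hk2 : k ^ 2 < 1 := by nlinarith
  have hpos : ∀ t : ℝ, 0 < 1 - k ^ 2 * sin t ^ 2 := by
    intro t
    nlinarith [Real.sin_sq_le_one t, sq_nonneg k, sq_nonneg (Real.sin t)]
  set f : ℝ → ℝ := fun t => (2 - k ^ 2) * (1 / Real.sqrt (1 - k ^ 2 * sin t ^ 2))
      - 2 * Real.sqrt (1 - k ^ 2 * sin t ^ 2) with hf
  have h1 : Continuous fun t : ℝ => 1 - k ^ 2 * sin t ^ 2 := by continuity
  have h2 : Continuous fun t : ℝ => Real.sqrt (1 - k ^ 2 * sin t ^ 2) :=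
    Real.continuous_sqrt.comp h1
  have hne : ∀ t : ℝ, Real.sqrt (1 - k ^ 2 * sin t ^ 2) ≠ 0 := fun t =>
    (Real.sqrt_pos.mpr (hpos t)).ne'
  have hc1 : Continuous fun t : ℝ => (2 - k ^ 2) * (1 / Real.sqrt (1 - k ^ 2 * sin t ^ 2)) :=
    continuous_const.mul (continuous_const.div h2 hne)
  have hc2 : Continuous fun t : ℝ => 2 * Real.sqrt (1 - k ^ 2 * sin t ^ 2) :=
    continuous_const.mul h2
  have hcont : Continuous f := hc1.sub hc2
  have hint : ∀ a b : ℝ, IntervalIntegrable f MeasureTheory.volume a b := fun a b =>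
    hcont.intervalIntegrable a b
  -- the difference as an integral
  have hD : (2 - k ^ 2) * ellK k - 2 * ellE k = ∫ t in (0:ℝ)..(π/2), f t := by
    unfold ellK ellE
    rw [hf, intervalIntegral.integral_sub (hc1.intervalIntegrable _ _)
      (hc2.intervalIntegrable _ _), intervalIntegral.integral_const_mul,
      intervalIntegral.integral_const_mul]
  -- split the integral
  have hadd : (∫ t in (0:ℝ)..(π/4), f t) + ∫ t in (π/4:ℝ)..(π/2), f t
      = ∫ t in (0:ℝ)..(π/2), f t :=
    intervalIntegral.integral_add_adjacent_intervals (hint _ _) (hint _ _)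
  have hcomp : (∫ t in (0:ℝ)..(π/4), f (π/2 - t)) = ∫ t in (π/4:ℝ)..(π/2), f t := by
    rw [intervalIntegral.integral_comp_sub_left f (π/2)]
    norm_num
    ring_nf
  have hintc : IntervalIntegrable (fun t => f (π/2 - t)) MeasureTheory.volume 0 (π/4) :=
    (hcont.comp (continuous_const.sub continuous_id)).intervalIntegrable _ _
  have hsum : (∫ t in (0:ℝ)..(π/4), (f t + f (π/2 - t)))
      = ∫ t in (0:ℝ)..(π/2), f t := by
    rw [intervalIntegral.integral_add (hint _ _) hintc, hcomp, hadd]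
  -- pointwise positivity on (0, π/4)
  have hπ : (0:ℝ) < π := pi_pos
  have hptwise : ∀ t ∈ Ioo (0:ℝ) (π/4), 0 < f t + f (π/2 - t) := by
    rintro t ⟨ht0, ht4⟩
    have hs0 : 0 < sin t := Real.sin_pos_of_pos_of_lt_pi ht0 (by linarith)
    have hsc : sin t < sin (π/2 - t) := by
      apply Real.strictMonoOn_sin ⟨by linarith, by linarith⟩ ⟨by linarith, by linarith⟩
      linarith
    have hsq : sin t ^ 2 + sin (π/2 - t) ^ 2 = 1 := by
      rw [Real.sin_pi_div_two_sub]
      exact Real.sin_sq_add_cos_sq t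
    simp only [hf]
    set a := Real.sqrt (1 - k ^ 2 * sin t ^ 2) with hadef
    set b := Real.sqrt (1 - k ^ 2 * sin (π/2 - t) ^ 2) with hbdef
    have ha2 : a ^ 2 = 1 - k ^ 2 * sin t ^ 2 := Real.sq_sqrt (hpos t).le
    have hb2 : b ^ 2 = 1 - k ^ 2 * sin (π/2 - t) ^ 2 := Real.sq_sqrt (hpos _).le
    have ha0 : 0 < a := Real.sqrt_pos.mpr (hpos t)
    have hb0 : 0 < b := Real.sqrt_pos.mpr (hpos _)
    have hlt : 1 - k ^ 2 * sin (π/2 - t) ^ 2 < 1 - k ^ 2 * sin t ^ 2 := by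
      have : sin t ^ 2 < sin (π/2 - t) ^ 2 := by nlinarith
      nlinarith [sq_nonneg k, mul_pos hk0 hk0]
    have hba : b < a := by
      rw [hadef, hbdef]
      exact Real.sqrt_lt_sqrt (hpos _).le hlt
    have h2k : 2 - k ^ 2 = a ^ 2 + b ^ 2 := by
      rw [ha2, hb2]
      linear_combination k ^ 2 * hsq
    rw [h2k]
    have hfinal : (a ^ 2 + b ^ 2) * (1 / a) - 2 * a + ((a ^ 2 + b ^ 2) * (1 / b) - 2 * b)
        = (a + b) * (a - b) ^ 2 / (a * b) := by
      field_simp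
      ring
    rw [hfinal]
    exact div_pos (mul_pos (by linarith) (pow_pos (by linarith) 2)) (mul_pos ha0 hb0)
  have hquarter : (0:ℝ) < π/4 := by linarith
  have hI : 0 < ∫ t in (0:ℝ)..(π/4), (f t + f (π/2 - t)) :=
    intervalIntegral.intervalIntegral_pos_of_pos_on ((hint 0 (π/4)).add hintc)
      hptwise hquarter
  rw [hsum, ← hD] at hI
  linarith
end

section
/- For every u ∈ (0, π), the derivative at u of the function u ↦ −(d₀⁰(u) + d₂⁰(u))/(sin u·(sin u − u·cos u)) equals (−2u + sin(2u))²/(4·sin² u), where d₀⁰(u) = (1/2)·sin u·(2u³·sin u + 3u²·cos u + u·sin³ u − 6u·sin u + 3·cos u·sin² u) and d₂⁰(u) = −u·sin⁴ u − 2·cos u·sin³ u + 3u·sin² u − u³. -/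
open Set Real

/-! The numerator factors as `−(d₀⁰ + d₂⁰) = ½ (sin u − u cos u)(sin² u cos u + u sin u − 2u² cos u)`,
so on `(0, π)`, where `sin u > 0` and `sin u > u cos u`, the quotient is
`½ sin u cos u + u/2 − u² cos u / sin u`. Its derivative is
`cos² u − 2u cos u / sin u + u² / sin² u = (cos u − u / sin u)²`, which is the claimed square
since `sin 2u = 2 sin u cos u`. -/

noncomputable def d00 (u : ℝ) : ℝ :=
  (1/2) * sin u * (2 * u ^ 3 * sin u + 3 * u ^ 2 * cos u + u * sin u ^ 3
    - 6 * u * sin u + 3 * cos u * sin u ^ 2)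

noncomputable def d20 (u : ℝ) : ℝ :=
  -(u * sin u ^ 4) - 2 * cos u * sin u ^ 3 + 3 * u * sin u ^ 2 - u ^ 3

theorem neg_d00_add_d20 (u : ℝ) :
    -(d00 u + d20 u) =
      (sin u - u * cos u) * (sin u ^ 2 * cos u + u * sin u - 2 * u ^ 2 * cos u) / 2 := by
  unfold d00 d20
  linear_combination (u * sin u ^ 2 / 2 - u ^ 3) * sin_sq_add_cos_sq u

theorem neg_d00_add_d20_div {u : ℝ} (hs : sin u ≠ 0) (hd : sin u - u * cos u ≠ 0) :
    -(d00 u + d20 u) / (sin u * (sin u - u * cos u)) =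
      sin u * cos u / 2 + u / 2 - u ^ 2 * cos u / sin u := by
  rw [neg_d00_add_d20]
  field_simp

theorem Real.mul_cos_lt_sin {x : ℝ} (h0 : 0 < x) (hπ : x < π) : x * cos x < sin x := by
  have hs : 0 < sin x := sin_pos_of_pos_of_lt_pi h0 hπ
  rcases le_or_gt (cos x) 0 with hc | hc
  · nlinarith
  · have hx : x < π / 2 := by
      by_contra! h
      linarith [cos_nonpos_of_pi_div_two_le_of_le h (by linarith [pi_pos])]
    have := lt_tan h0 hx
    rwa [tan_eq_sin_div_cos, lt_div_iff₀ hc] at this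

theorem hasDerivAt_reduced_quotient {u : ℝ} (hs : sin u ≠ 0) :
    HasDerivAt (fun u ↦ sin u * cos u / 2 + u / 2 - u ^ 2 * cos u / sin u)
      ((sin u * cos u - u) ^ 2 / sin u ^ 2) u := by
  have h := ((((hasDerivAt_sin u).mul (hasDerivAt_cos u)).div_const 2).add
    ((hasDerivAt_id u).div_const 2)).sub
    (((hasDerivAt_pow 2 u).mul (hasDerivAt_cos u)).div (hasDerivAt_sin u) hs)
  refine h.congr_deriv ?_
  simp only [Pi.mul_apply]
  field_simp
  linear_combination (2 * u ^ 2 - sin u ^ 2) * sin_sq_add_cos_sq u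

/-- For `u ∈ (0, π)`, the derivative of
`u ↦ −(d₀⁰(u) + d₂⁰(u))/(sin u·(sin u − u·cos u))` equals
`(−2u + sin(2u))²/(4·sin² u)`. -/
theorem deriv_d00_add_d20_quotient :
    ∀ u ∈ Ioo 0 π,
      deriv (fun u : ℝ =>
          -((1/2) * sin u * (2 * u ^ 3 * sin u + 3 * u ^ 2 * cos u + u * sin u ^ 3
                - 6 * u * sin u + 3 * cos u * sin u ^ 2)
              + (-(u * sin u ^ 4) - 2 * cos u * sin u ^ 3 + 3 * u * sin u ^ 2 - u ^ 3))
            / (sin u * (sin u - u * cos u))) u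
        = (-2 * u + sin (2 * u)) ^ 2 / (4 * sin u ^ 2) := by
  intro u hu
  change deriv (fun u ↦ -(d00 u + d20 u) / (sin u * (sin u - u * cos u))) u = _
  have hs : sin u ≠ 0 := (sin_pos_of_pos_of_lt_pi hu.1 hu.2).ne'
  have hquot : (fun u ↦ -(d00 u + d20 u) / (sin u * (sin u - u * cos u)))
      =ᶠ[nhds u] fun u ↦ sin u * cos u / 2 + u / 2 - u ^ 2 * cos u / sin u := by
    filter_upwards [isOpen_Ioo.mem_nhds hu] with v ⟨hv0, hvπ⟩
    exact neg_d00_add_d20_div (sin_pos_of_pos_of_lt_pi hv0 hvπ).ne'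
      (sub_pos.2 (mul_cos_lt_sin hv0 hvπ)).ne'
  rw [hquot.deriv_eq, (hasDerivAt_reduced_quotient hs).deriv, sin_two_mul]
  field_simp
  ring
end
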